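/- arXiv:1708.06153 — 7 statements merged into one kernel-verified Lean document; each statement's English description precedes it below -/
import Mathlib

section
/- Let G be a uniform graph (every vertex has at most μ neighbors for some fixed μ). Given two vertices a,b, a geodesic [ab] joining them, and a vertex v₀ in the interior of [ab] (distinct from a and b), there exists a minimal ab-separator S containing v₀. -/
/- Combinatorial model: a graph with unit edge lengths, viewed through its
vertex set with the shortest-path metric `SimpleGraph.dist`. -/

namespace SimpleGraph

variable {V : Type*} (G : SimpleGraph V)

/-- `G` is `μ`-uniform: every vertex has at most `μ` neighbors. -/
def UniformGraph (μ : ℕ) : Prop :=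
  ∀ v : V, (G.neighborSet v).Finite ∧ (G.neighborSet v).ncard ≤ μ

/-- A walk is a geodesic if its length realizes the distance between its ends. -/
def IsGeodesic {a b : V} (p : G.Walk a b) : Prop := p.length = G.dist a b

/-- The length metric `d_w` on the subgraph formed by the edges of the walk `w`. -/
noncomputable def walkDist {a b : V} (w : G.Walk a b) (p q : V) : ℕ :=
  (SimpleGraph.fromEdgeSet {e | e ∈ w.edges}).dist p q

/-- `σ` is a shortcut of the cycle `c`: a path joining two vertices `p, q` of `c`
with `L(σ) < d_c(p,q)`. -/
def IsShortcut {v p q : V} (c : G.Walk v v) (σ : G.Walk p q) : Prop :=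
  σ.IsPath ∧ p ∈ c.support ∧ q ∈ c.support ∧ σ.length < G.walkDist c p q

/-- A strict shortcut meets the cycle only in its endpoints (the shortcut vertices). -/
def IsStrictShortcut {v p q : V} (c : G.Walk v v) (σ : G.Walk p q) : Prop :=
  G.IsShortcut c σ ∧ {x | x ∈ σ.support} ∩ {x | x ∈ c.support} = {p, q}

/-- `G` is `(k,m)`-chordal: every cycle of length at least `k` has a shortcut of
length at most `m`. -/
def KMChordal (k m : ℕ) : Prop :=
  ∀ (v : V) (c : G.Walk v v), c.IsCycle → k ≤ c.length →
    ∃ (p q : V) (σ : G.Walk p q), G.IsShortcut c σ ∧ σ.length ≤ m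

/-- `G` is `ε`-densely `(k,m)`-chordal on the family `F` of cycles: every cycle in `F`
of length at least `k` has strict shortcuts of length at most `m` whose shortcut
vertices are `ε`-dense in the cycle metric. -/
def DenselyChordalOn (F : ∀ v : V, G.Walk v v → Prop) (ε : ℝ) (k m : ℕ) : Prop :=
  ∀ (v : V) (c : G.Walk v v), c.IsCycle → F v c → k ≤ c.length →
    ∀ x ∈ c.support, ∃ (p q : V) (σ : G.Walk p q),
      G.IsStrictShortcut c σ ∧ σ.length ≤ m ∧ (G.walkDist c x p : ℝ) < ε

/-- `G` is `ε`-densely `(k,m)`-chordal (on all cycles). -/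
def DenselyChordal (ε : ℝ) (k m : ℕ) : Prop :=
  G.DenselyChordalOn (fun _ _ => True) ε k m

/-- `S` is an `ab`-separator: `a, b ∉ S` and every walk from `a` to `b` meets `S`. -/
def Separates (S : Set V) (a b : V) : Prop :=
  a ∉ S ∧ b ∉ S ∧ ∀ p : G.Walk a b, ∃ v ∈ p.support, v ∈ S

/-- `S` is a minimal `ab`-separator. -/
def MinimalABSeparator (S : Set V) (a b : V) : Prop :=
  G.Separates S a b ∧ ∀ S' : Set V, S' ⊂ S → ¬ G.Separates S' a b

end SimpleGraph


section Aux

open SimpleGraph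

variable {V : Type*} {G : SimpleGraph V}

/-- Discrete intermediate value: along a walk, distance from `a` hits every
intermediate value. -/
lemma walk_ivt (hconn : G.Connected) (a : V) (r : ℕ) :
    ∀ {x y : V} (w : G.Walk x y), G.dist a x ≤ r → r ≤ G.dist a y →
    ∃ v ∈ w.support, G.dist a v = r := by
  intro x y w
  induction w with
  | nil => exact fun hx hy => ⟨_, by simp, le_antisymm hx hy⟩
  | @cons u v' y' h w ih =>
    intro hx hy
    by_cases hur : G.dist a u = r
    · exact ⟨u, by simp, hur⟩
    · have h1 : G.dist a v' ≤ G.dist a u + G.dist u v' := hconn.dist_triangle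
      have h2 : G.dist u v' = 1 := SimpleGraph.dist_eq_one_iff_adj.mpr h
      have hle : G.dist a v' ≤ r := by omega
      obtain ⟨v, hv, hvr⟩ := ih hle hy
      exact ⟨v, by simp [hv], hvr⟩

/-- On a geodesic walk, distances split additively at every support vertex. -/
lemma geodesic_dist_split (hconn : G.Connected) {u v x : V} (w : G.Walk u v)
    (hw : w.length = G.dist u v) (hx : x ∈ w.support) :
    G.dist u x + G.dist x v = G.dist u v := by
  classical
  have h1 : G.dist u x ≤ (w.takeUntil x hx).length := SimpleGraph.dist_le _
  have h2 : G.dist x v ≤ (w.dropUntil x hx).length := SimpleGraph.dist_le _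
  have h3 : (w.takeUntil x hx).length + (w.dropUntil x hx).length = w.length := by
    have := w.take_spec hx
    calc (w.takeUntil x hx).length + (w.dropUntil x hx).length
        = ((w.takeUntil x hx).append (w.dropUntil x hx)).length :=
          (SimpleGraph.Walk.length_append _ _).symm
      _ = w.length := congrArg SimpleGraph.Walk.length this
  have h4 : G.dist u v ≤ G.dist u x + G.dist x v := hconn.dist_triangle
  omega

end Aux

/-- In a uniform connected graph, for any geodesic `[ab]` and any vertex
`v₀` of it distinct from `a` and `b`, there is a minimal `ab`-separator containing `v₀`. -/
theorem exists_minimal_separator_through_geodesic_vertex {V : Type*} (G : SimpleGraph V)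
    (hconn : G.Connected) (μ : ℕ) (hμ : G.UniformGraph μ)
    (a b v₀ : V) (p : G.Walk a b) (hp : G.IsGeodesic p)
    (hv : v₀ ∈ p.support) (hva : v₀ ≠ a) (hvb : v₀ ≠ b) :
    ∃ S : Set V, v₀ ∈ S ∧ G.MinimalABSeparator S a b := by
    classical
  set r := G.dist a v₀ with hr
  set d := G.dist a b with hd
  have hsplit : G.dist a v₀ + G.dist v₀ b = d := geodesic_dist_split hconn p hp hv
  have hrpos : 0 < r := hconn.pos_dist_of_ne (Ne.symm hva)
  have hvbpos : 0 < G.dist v₀ b := hconn.pos_dist_of_ne hvb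
  -- the sphere of radius r around a
  set S₀ : Set V := {v | G.dist a v = r} with hS₀
  -- the geodesic p meets S₀ only at v₀
  have htake_len : (p.takeUntil v₀ hv).length = r ∧ (p.dropUntil v₀ hv).length = G.dist v₀ b := by
    have h1 : G.dist a v₀ ≤ (p.takeUntil v₀ hv).length := SimpleGraph.dist_le _
    have h2 : G.dist v₀ b ≤ (p.dropUntil v₀ hv).length := SimpleGraph.dist_le _
    have h3 : (p.takeUntil v₀ hv).length + (p.dropUntil v₀ hv).length = p.length := by
      have := p.take_spec hv
      calc (p.takeUntil v₀ hv).length + (p.dropUntil v₀ hv).length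
          = ((p.takeUntil v₀ hv).append (p.dropUntil v₀ hv)).length :=
            (SimpleGraph.Walk.length_append _ _).symm
        _ = p.length := congrArg SimpleGraph.Walk.length this
    unfold SimpleGraph.IsGeodesic at hp
    constructor <;> omega
  have huniq : ∀ x ∈ p.support, G.dist a x = r → x = v₀ := by
    intro x hx hxr
    have hx' : x ∈ ((p.takeUntil v₀ hv).append (p.dropUntil v₀ hv)).support := by
      rw [p.take_spec hv]; exact hx
    rw [SimpleGraph.Walk.mem_support_append_iff] at hx'
    rcases hx' with hx1 | hx2
    · have := geodesic_dist_split hconn (p.takeUntil v₀ hv) (htake_len.1) hx1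
      have : G.dist x v₀ = 0 := by omega
      exact (hconn.dist_eq_zero_iff.mp this)
    · have := geodesic_dist_split hconn (p.dropUntil v₀ hv) (htake_len.2) hx2
      have htri : G.dist a b ≤ G.dist a x + G.dist x b := hconn.dist_triangle
      have : G.dist v₀ x = 0 := by omega
      exact (hconn.dist_eq_zero_iff.mp this).symm
  -- S₀ separates a and b
  have hS₀sep : G.Separates S₀ a b := by
    refine ⟨?_, ?_, ?_⟩
    · simp only [hS₀, Set.mem_setOf_eq, SimpleGraph.dist_self]; omega
    · simp only [hS₀, Set.mem_setOf_eq, ← hd]; omega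
    · intro w
      exact walk_ivt hconn a r w (by simp [SimpleGraph.dist_self]) (by rw [← hd]; omega)
  -- Zorn: find a minimal separator inside S₀
  set F : Set (Set V) := {T | T ⊆ S₀ ∧ G.Separates T a b} with hF
  have hzorn : ∃ m, m ⊆ S₀ ∧ Minimal (· ∈ F) m := by
    apply zorn_superset_nonempty F _ S₀ ⟨le_refl _, hS₀sep⟩
    intro c hcF hchain hcne
    refine ⟨⋂₀ c, ⟨?_, ?_, ?_, ?_⟩, fun s hs => Set.sInter_subset_of_mem hs⟩
    · obtain ⟨T, hT⟩ := hcne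
      exact (Set.sInter_subset_of_mem hT).trans (hcF hT).1
    · obtain ⟨T, hT⟩ := hcne
      intro hmem
      exact (hcF hT).2.1 (hmem T hT)
    · obtain ⟨T, hT⟩ := hcne
      intro hmem
      exact (hcF hT).2.2.1 (hmem T hT)
    · intro w
      -- each T ∈ c meets w.support; take a minimal such trace
      set K : Set (Set V) := (fun T => T ∩ {v | v ∈ w.support}) '' c with hK
      have hKfin : K.Finite := by
        apply Set.Finite.subset (Set.Finite.finite_subsets (w.support.finite_toSet))
        rintro _ ⟨T, _, rfl⟩
        intro x hx
        exact hx.2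
      have hKne : K.Nonempty := by
        obtain ⟨T, hT⟩ := hcne
        exact ⟨_, T, hT, rfl⟩
      obtain ⟨M, hM, hMmin⟩ : ∃ M ∈ K, ∀ M' ∈ K, id M' ≤ id M → id M = id M' := by
        obtain ⟨M, hM, hMmin⟩ := Set.Finite.exists_minimalFor id K hKfin hKne
        exact ⟨M, hM, fun M' hM' hle => le_antisymm (hMmin hM' hle) hle⟩
      obtain ⟨T₀, hT₀c, rfl⟩ := hM
      have hMne : (T₀ ∩ {v | v ∈ w.support}).Nonempty := by
        obtain ⟨v, hvsup, hvT⟩ := (hcF hT₀c).2.2.2 w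
        exact ⟨v, hvT, hvsup⟩
      obtain ⟨v, hvmem⟩ := hMne
      refine ⟨v, hvmem.2, ?_⟩
      intro T hTc
      rcases hchain.total hT₀c hTc with h | h
      · exact h hvmem.1
      · have hsub : T ∩ {v | v ∈ w.support} ⊆ T₀ ∩ {v | v ∈ w.support} :=
          Set.inter_subset_inter_left _ h
        have heq := hMmin (T ∩ {v | v ∈ w.support}) ⟨T, hTc, rfl⟩ hsub
        simp only [id_eq] at heq
        have : v ∈ T ∩ {v | v ∈ w.support} := heq ▸ hvmem
        exact this.1
  obtain ⟨m, hmS₀, hmF⟩ := hzorn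
  have hmsep : G.Separates m a b := hmF.1.2
  have hv₀m : v₀ ∈ m := by
    obtain ⟨x, hxsup, hxm⟩ := hmsep.2.2 p
    have := huniq x hxsup (hmF.1.1 hxm)
    rwa [this] at hxm
  refine ⟨m, hv₀m, hmsep, ?_⟩
  intro S' hS' hS'sep
  have : S' ∈ F := ⟨hS'.1.trans hmF.1.1, hS'sep⟩
  exact hS'.2 (hmF.2 this hS'.1)
end

section
/- Let G be a uniform countable graph, a,b two vertices, γ₀ an ab-path, and v₀ a vertex of γ₀ distinct from a,b. Then either there is a 1-shortcut in γ₀ (an edge of G joining two vertices of γ₀ at γ₀-distance at least 2), or there exists a minimal ab-separator containing v₀. -/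
section Aux

variable {V : Type*} {G : SimpleGraph V}

open SimpleGraph

open Classical in
/-- Index of a vertex along a walk. -/
noncomputable def idxW : ∀ {a b : V}, G.Walk a b → V → ℕ
  | _, _, SimpleGraph.Walk.nil, _ => 0
  | a, _, SimpleGraph.Walk.cons _ p, x => if x = a then 0 else idxW p x + 1

open Classical in
lemma idxW_cons {a c b x : V} (h : G.Adj a c) (p : G.Walk c b) :
    idxW (SimpleGraph.Walk.cons h p) x = if x = a then 0 else idxW p x + 1 := rfl

lemma idxW_start {a b : V} (p : G.Walk a b) : idxW p a = 0 := by
  cases p with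
  | nil => rfl
  | cons h p => rw [idxW_cons, if_pos rfl]

lemma idxW_inj {a b : V} {p : G.Walk a b} (hp : p.IsPath) {x y : V}
    (hx : x ∈ p.support) (hy : y ∈ p.support) (h : idxW p x = idxW p y) : x = y := by
  induction p with
  | nil => simp at hx hy; rw [hx, hy]
  | @cons a c b hadj p ih =>
    rw [SimpleGraph.Walk.cons_isPath_iff] at hp
    rw [SimpleGraph.Walk.support_cons, List.mem_cons] at hx hy
    rw [idxW_cons, idxW_cons] at h
    by_cases hxa : x = a <;> by_cases hya : y = a
    · rw [hxa, hya]
    · rw [if_pos hxa, if_neg hya] at h; omega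
    · rw [if_neg hxa, if_pos hya] at h; omega
    · rw [if_neg hxa, if_neg hya] at h
      exact ih hp.1 (hx.resolve_left hxa) (hy.resolve_left hya) (by omega)

lemma idxW_lt_end {a b : V} {p : G.Walk a b} (hp : p.IsPath) {x : V}
    (hx : x ∈ p.support) (hxb : x ≠ b) : idxW p x < idxW p b := by
  induction p with
  | nil => simp at hx; exact absurd hx hxb
  | @cons a c b hadj p ih =>
    rw [SimpleGraph.Walk.cons_isPath_iff] at hp
    have hb : b ∈ p.support := p.end_mem_support
    have hba : b ≠ a := fun h => hp.2 (h ▸ hb)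
    rw [SimpleGraph.Walk.support_cons, List.mem_cons] at hx
    rw [idxW_cons, idxW_cons, if_neg hba]
    by_cases hxa : x = a
    · rw [if_pos hxa]; omega
    · rw [if_neg hxa]
      have := ih hp.1 (hx.resolve_left hxa) hxb
      omega

lemma idxW_edge {a b : V} {p : G.Walk a b} (hp : p.IsPath) {x y : V}
    (he : s(x, y) ∈ p.edges) :
    idxW p y = idxW p x + 1 ∨ idxW p x = idxW p y + 1 := by
  induction p with
  | nil => simp at he
  | @cons a c b hadj p ih =>
    rw [SimpleGraph.Walk.cons_isPath_iff] at hp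
    rw [SimpleGraph.Walk.edges_cons, List.mem_cons] at he
    rcases he with he | he
    · have hca : c ≠ a := hadj.ne'
      rw [Sym2.eq_iff] at he
      rcases he with ⟨hxa, hyc⟩ | ⟨hxc, hya⟩
      · left
        rw [hxa, hyc, idxW_cons, idxW_cons, if_pos rfl, if_neg hca, idxW_start]
      · right
        rw [hxc, hya, idxW_cons, idxW_cons, if_pos rfl, if_neg hca, idxW_start]
    · have hxs : x ∈ p.support := p.fst_mem_support_of_mem_edges he
      have hys : y ∈ p.support := p.snd_mem_support_of_mem_edges he
      have hxa : x ≠ a := fun h => hp.2 (h ▸ hxs)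
      have hya : y ≠ a := fun h => hp.2 (h ▸ hys)
      rw [idxW_cons, idxW_cons, if_neg hxa, if_neg hya]
      rcases ih hp.1 he with h | h
      · left; omega
      · right; omega

/-- With no 1-shortcut, any `G`-edge between vertices of the path is an edge of the path. -/
lemma edge_of_adj {a b : V} {γ : G.Walk a b} (hγ : γ.IsPath)
    (hns : ∀ x ∈ γ.support, ∀ y ∈ γ.support, G.Adj x y → G.walkDist γ x y < 2)
    {x y : V} (hx : x ∈ γ.support) (hy : y ∈ γ.support) (hadj : G.Adj x y) :
    s(x, y) ∈ γ.edges := by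
  classical
  set H : SimpleGraph V := SimpleGraph.fromEdgeSet {e | e ∈ γ.edges} with hH
  have hsub : ∀ e, e ∈ γ.edges → e ∈ H.edgeSet := by
    intro e he
    rw [hH, SimpleGraph.edgeSet_fromEdgeSet]
    exact ⟨he, G.not_isDiag_of_mem_edgeSet (γ.edges_subset_edgeSet he)⟩
  have htw : (γ.transfer H hsub).support = γ.support := γ.support_transfer hsub
  have hreach : ∀ z ∈ γ.support, H.Reachable a z := by
    intro z hz
    exact ⟨(γ.transfer H hsub).takeUntil z (htw ▸ hz)⟩
  have hr : H.Reachable x y := ((hreach x hx).symm.trans (hreach y hy))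
  have hpos : 0 < H.dist x y := hr.pos_dist_of_ne hadj.ne
  have hlt : H.dist x y < 2 := hns x hx y hy hadj
  have h1 : H.dist x y = 1 := by omega
  have hHadj : H.Adj x y := (SimpleGraph.dist_eq_one_iff_adj).mp h1
  rw [hH, SimpleGraph.fromEdgeSet_adj] at hHadj
  exact hHadj.1

/-- Key lemma: a walk staying inside a no-shortcut path must pass through `v₀`. -/
lemma mem_support_of_walk {a b v₀ : V} {γ : G.Walk a b} (hγ : γ.IsPath)
    (hns : ∀ x ∈ γ.support, ∀ y ∈ γ.support, G.Adj x y → G.walkDist γ x y < 2)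
    (hv : v₀ ∈ γ.support) (hvb : v₀ ≠ b) :
    ∀ (c : V) (w : G.Walk c b), (∀ z ∈ w.support, z ∈ γ.support) →
      idxW γ c ≤ idxW γ v₀ → v₀ ∈ w.support := by
  have hvend : idxW γ v₀ < idxW γ b := idxW_lt_end hγ hv hvb
  have key : ∀ (n : ℕ) (c : V) (w : G.Walk c b), w.length = n →
      (∀ z ∈ w.support, z ∈ γ.support) → idxW γ c ≤ idxW γ v₀ → v₀ ∈ w.support := by
    intro n
    induction n with
    | zero =>
      intro c w hlen hss hle
      cases w with
      | nil => exact absurd hle (by omega)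
      | cons hadj w' => simp [SimpleGraph.Walk.length_cons] at hlen
    | succ n ihn =>
      intro c w hlen hss hle
      cases w with
      | nil => exact absurd hle (by omega)
      | @cons c d b hadj w' =>
        by_cases hcv : c = v₀
        · rw [SimpleGraph.Walk.support_cons]
          exact List.mem_cons.mpr (Or.inl hcv.symm)
        · have hcs : c ∈ γ.support :=
            hss c ((SimpleGraph.Walk.cons hadj w').start_mem_support)
          have hds : d ∈ γ.support := by
            apply hss d
            rw [SimpleGraph.Walk.support_cons, List.mem_cons]
            exact Or.inr w'.start_mem_support
          have hne : idxW γ c ≠ idxW γ v₀ := fun h => hcv (idxW_inj hγ hcs hv h)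
          have hlt : idxW γ c < idxW γ v₀ := lt_of_le_of_ne hle hne
          have hedge : s(c, d) ∈ γ.edges := edge_of_adj hγ hns hcs hds hadj
          have hstep := idxW_edge hγ hedge
          have hd : idxW γ d ≤ idxW γ v₀ := by omega
          have hss' : ∀ z ∈ w'.support, z ∈ γ.support := by
            intro z hz
            exact hss z (by rw [SimpleGraph.Walk.support_cons, List.mem_cons]; exact Or.inr hz)
          have hlen' : w'.length = n := by
            rw [SimpleGraph.Walk.length_cons] at hlen; omega
          have := ihn d w' hlen' hss' hd
          rw [SimpleGraph.Walk.support_cons, List.mem_cons]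
          exact Or.inr this
  exact fun c w hss hle => key w.length c w rfl hss hle

end Aux

/-- In a uniform countable connected graph, for any `ab`-path `γ₀` and any
vertex `v₀` of it distinct from `a,b`, either `γ₀` has a 1-shortcut or there is a
minimal `ab`-separator containing `v₀`. -/
theorem shortcut_or_minimal_separator {V : Type*} [Countable V] (G : SimpleGraph V)
    (hconn : G.Connected) (μ : ℕ) (hμ : G.UniformGraph μ)
    (a b v₀ : V) (γ₀ : G.Walk a b) (hγ : γ₀.IsPath)
    (hv : v₀ ∈ γ₀.support) (hva : v₀ ≠ a) (hvb : v₀ ≠ b) :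
    (∃ x ∈ γ₀.support, ∃ y ∈ γ₀.support, G.Adj x y ∧ 2 ≤ G.walkDist γ₀ x y) ∨
      ∃ S : Set V, v₀ ∈ S ∧ G.MinimalABSeparator S a b := by
  classical
  by_cases hsc : ∃ x ∈ γ₀.support, ∃ y ∈ γ₀.support, G.Adj x y ∧ 2 ≤ G.walkDist γ₀ x y
  · exact Or.inl hsc
  right
  have hns : ∀ x ∈ γ₀.support, ∀ y ∈ γ₀.support, G.Adj x y → G.walkDist γ₀ x y < 2 := by
    intro x hx y hy hadj
    by_contra h
    exact hsc ⟨x, hx, y, hy, hadj, le_of_not_gt h⟩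
  -- the base separator
  set S₀ : Set V := insert v₀ {x | x ∉ γ₀.support} with hS₀def
  set P : Set (Set V) := {S | G.Separates S a b ∧ v₀ ∈ S} with hPdef
  have hS₀ : S₀ ∈ P := by
    refine ⟨⟨?_, ?_, ?_⟩, Set.mem_insert _ _⟩
    · intro h
      rcases h with h | h
      · exact hva h.symm
      · exact h γ₀.start_mem_support
    · intro h
      rcases h with h | h
      · exact hvb h.symm
      · exact h γ₀.end_mem_support
    · intro p
      by_cases hp : ∀ z ∈ p.support, z ∈ γ₀.support
      · have : v₀ ∈ p.support := by
          apply mem_support_of_walk hγ hns hv hvb a p hp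
          rw [idxW_start]
          exact Nat.zero_le _
        exact ⟨v₀, this, Set.mem_insert _ _⟩
      · push_neg at hp
        obtain ⟨z, hz1, hz2⟩ := hp
        exact ⟨z, hz1, Set.mem_insert_of_mem _ hz2⟩
  -- Zorn's lemma for a minimal separator containing v₀
  have hzorn : ∀ c ⊆ P, IsChain (· ⊆ ·) c → c.Nonempty →
      ∃ lb ∈ P, ∀ s ∈ c, lb ⊆ s := by
    intro c hcP hchain ⟨T₀, hT₀⟩
    refine ⟨⋂₀ c, ⟨⟨?_, ?_, ?_⟩, ?_⟩, fun s hs => Set.sInter_subset_of_mem hs⟩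
    · intro h
      exact (hcP hT₀).1.1 (h T₀ hT₀)
    · intro h
      exact (hcP hT₀).1.2.1 (h T₀ hT₀)
    · intro p
      set sp : Set V := {x | x ∈ p.support} with hspdef
      have hspfin : sp.Finite := p.support.finite_toSet
      set N : Set ℕ := {n | ∃ S ∈ c, (S ∩ sp).ncard = n} with hNdef
      have hNne : N.Nonempty := ⟨(T₀ ∩ sp).ncard, T₀, hT₀, rfl⟩
      obtain ⟨S', hS'c, hS'card⟩ := Nat.sInf_mem hNne
      have hmin : ∀ S ∈ c, S' ∩ sp ⊆ S ∩ sp := by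
        intro S hSc
        by_cases hSS : S = S'
        · rw [hSS]
        · rcases hchain hS'c hSc (fun h => hSS h.symm) with h | h
          · exact Set.inter_subset_inter_left sp h
          · have hsub : S ∩ sp ⊆ S' ∩ sp := Set.inter_subset_inter_left sp h
            have hle : (S' ∩ sp).ncard ≤ (S ∩ sp).ncard := by
              rw [hS'card]
              exact Nat.sInf_le ⟨S, hSc, rfl⟩
            have := Set.eq_of_subset_of_ncard_le hsub hle
              (hspfin.subset Set.inter_subset_right)
            rw [this]
      obtain ⟨u, hu1, hu2⟩ := (hcP hS'c).1.2.2 p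
      refine ⟨u, hu1, ?_⟩
      rw [Set.mem_sInter]
      intro S hSc
      exact (hmin S hSc ⟨hu2, hu1⟩).1
    · rw [Set.mem_sInter]
      intro S hSc
      exact (hcP hSc).2
  obtain ⟨m, hmS₀, hmmin⟩ := zorn_superset_nonempty P hzorn S₀ hS₀
  refine ⟨m, hmmin.1.2, hmmin.1.1, ?_⟩
  intro S' hS'ssub hS'sep
  by_cases hv₀S' : v₀ ∈ S'
  · have hS'P : S' ∈ P := ⟨hS'sep, hv₀S'⟩
    exact hS'ssub.2 (hmmin.2 hS'P hS'ssub.1)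
  · obtain ⟨u, hu1, hu2⟩ := hS'sep.2.2 γ₀
    have huS₀ : u ∈ S₀ := hmS₀ (hS'ssub.1 hu2)
    rcases huS₀ with h | h
    · exact hv₀S' (h ▸ hu2)
    · exact h hu1
end

section
/- Let G be a uniform graph. If every minimal vertex separator of G has diameter at most m, then G satisfies the Bottleneck Property with constant Δ = m + 2 (and hence is quasi-isometric to a tree). -/
namespace SimpleGraph

variable {V : Type*} (G : SimpleGraph V)

/-- Bottleneck Property with constant `Δ`: for any two distinct vertices, any geodesic
between them and any midpoint `z` of it, every walk between the two vertices meets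
the closed `Δ`-neighborhood of `z`. -/
def BP (Δ : ℝ) : Prop :=
  ∀ a b : V, a ≠ b → ∀ p : G.Walk a b, G.IsGeodesic p →
    ∀ z ∈ p.support, ((G.dist a z : ℤ) - (G.dist z b : ℤ)).natAbs ≤ 1 →
      ∀ γ : G.Walk a b, ∃ w ∈ γ.support, (G.dist w z : ℝ) ≤ Δ

end SimpleGraph

namespace SimpleGraph

variable {V : Type*}

/-- `G` is quasi-isometric to a tree. -/
def QIToTree (G : SimpleGraph V) : Prop :=
  ∃ (W : Type) (T : SimpleGraph W) (f : V → W) (lam C D : ℝ),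
    T.IsTree ∧ 1 ≤ lam ∧ 0 ≤ C ∧ 0 ≤ D ∧
    (∀ x y : V, (G.dist x y : ℝ) / lam - C ≤ (T.dist (f x) (f y) : ℝ) ∧
      (T.dist (f x) (f y) : ℝ) ≤ lam * (G.dist x y : ℝ) + C) ∧
    (∀ w : W, ∃ x : V, (T.dist w (f x) : ℝ) ≤ D)

end SimpleGraph

namespace SimpleGraph

variable {V : Type*} {G : SimpleGraph V}

lemma aux_adj_dist_le {u v : V} (h : G.Adj u v) : G.dist u v ≤ 1 := by
  simpa using G.dist_le (Walk.cons h Walk.nil)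

lemma aux_dist_getVert_le (hconn : G.Connected) :
    ∀ {u v : V} (p : G.Walk u v) (i : ℕ), G.dist u (p.getVert i) ≤ i := by
  intro u v p
  induction p with
  | nil => intro i; simp [Walk.getVert, dist_self]
  | cons h q ih =>
    intro i
    cases i with
    | zero => simp [dist_self]
    | succ n =>
      rw [Walk.getVert_cons_succ]
      calc G.dist _ _ ≤ G.dist _ _ + G.dist _ (q.getVert n) := hconn.dist_triangle
        _ ≤ 1 + n := Nat.add_le_add (aux_adj_dist_le h) (ih n)
        _ = n + 1 := by omega

lemma aux_dist_getVert_end_le :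
    ∀ {u v : V} (p : G.Walk u v) (i : ℕ), G.dist (p.getVert i) v ≤ p.length - i := by
  intro u v p
  induction p with
  | nil => intro i; simp [Walk.getVert, dist_self]
  | cons h q ih =>
    intro i
    cases i with
    | zero =>
      simpa using G.dist_le (Walk.cons h q)
    | succ n =>
      rw [Walk.getVert_cons_succ]
      simpa [Walk.length_cons, Nat.succ_sub_succ] using ih n

/-- On a geodesic, the `i`-th vertex is at distance `i` from the start and
`length - i` from the end. -/
lemma aux_geodesic_getVert (hconn : G.Connected) {u v : V} {p : G.Walk u v}
    (hp : p.length = G.dist u v) {i : ℕ} (hi : i ≤ p.length) :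
    G.dist u (p.getVert i) = i ∧ G.dist (p.getVert i) v = p.length - i := by
  have h1 := aux_dist_getVert_le hconn p i
  have h2 := aux_dist_getVert_end_le p i
  have h3 := hconn.dist_triangle (u := u) (v := p.getVert i) (w := v)
  omega

lemma aux_geodesic_support_dist (hconn : G.Connected) {u v : V} {p : G.Walk u v}
    (hp : p.length = G.dist u v) {x : V} (hx : x ∈ p.support) :
    ∃ i, i ≤ p.length ∧ p.getVert i = x ∧ G.dist u x = i ∧ G.dist x v = p.length - i := by
  obtain ⟨i, hix, hi⟩ := Walk.mem_support_iff_exists_getVert.mp hx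
  obtain ⟨h1, h2⟩ := aux_geodesic_getVert hconn hp hi
  exact ⟨i, hi, hix, by rw [← hix]; exact h1, by rw [← hix]; exact h2⟩

/-- Intermediate value property for distance to a fixed vertex along a walk. -/
lemma aux_intermediate (hconn : G.Connected) (a : V) :
    ∀ {u v : V} (p : G.Walk u v) (h : ℕ), G.dist a u ≤ h → h ≤ G.dist a v →
      ∃ x ∈ p.support, G.dist a x = h := by
  intro u v p
  induction p with
  | nil => intro h h1 h2; exact ⟨_, Walk.start_mem_support _, le_antisymm h1 h2⟩
  | @cons u u' v hadj q ih =>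
    intro h h1 h2
    by_cases hc : G.dist a u = h
    · exact ⟨u, Walk.start_mem_support _, hc⟩
    · have hu' : G.dist a u' ≤ h := by
        have := hconn.dist_triangle (u := a) (v := u) (w := u')
        have := aux_adj_dist_le hadj
        omega
      obtain ⟨x, hxmem, hxd⟩ := ih h hu' h2
      exact ⟨x, by simp [Walk.support_cons, hxmem], hxd⟩

/-- Any separator contains a minimal separator. -/
lemma aux_exists_minimal_separator {S₀ : Set V} {a b : V} (hS : G.Separates S₀ a b) :
    ∃ S, S ⊆ S₀ ∧ G.MinimalABSeparator S a b := by
  set 𝒮 : Set (Set V) := {S | S ⊆ S₀ ∧ G.Separates S a b} with h𝒮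
  have H : ∀ c ⊆ 𝒮, IsChain (· ⊆ ·) c → c.Nonempty → ∃ lb ∈ 𝒮, ∀ s ∈ c, lb ⊆ s := by
    rintro c hc hchain ⟨S₁, hS₁⟩
    refine ⟨⋂₀ c, ⟨(Set.sInter_subset_of_mem hS₁).trans (hc hS₁).1, ?_, ?_, ?_⟩,
      fun s hs => Set.sInter_subset_of_mem hs⟩
    · exact fun ha => (hc hS₁).2.1 (Set.sInter_subset_of_mem hS₁ ha)
    · exact fun hb => (hc hS₁).2.2.1 (Set.sInter_subset_of_mem hS₁ hb)
    · intro p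
      set A : Set (Set V) := (fun S => S ∩ {x | x ∈ p.support}) '' c with hA
      have hfin : A.Finite := by
        apply Set.Finite.subset (Set.Finite.finite_subsets (p.support.finite_toSet))
        rintro T ⟨S, hSc, rfl⟩
        exact Set.inter_subset_right
      have hne : A.Nonempty := ⟨_, ⟨S₁, hS₁, rfl⟩⟩
      obtain ⟨T₀, hT₀A, hT₀min⟩ := (hfin.exists_minimal hne).imp fun T (h : Minimal (· ∈ A) T) => (⟨h.1, fun T' hT' hle => le_antisymm (h.2 hT' hle) hle⟩ : T ∈ A ∧ ∀ T' ∈ A, T' ⊆ T → T = T')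
      obtain ⟨S₂, hS₂c, hT₀⟩ := hT₀A
      obtain ⟨x, hxp, hxS₂⟩ := (hc hS₂c).2.2.2 p
      refine ⟨x, hxp, ?_⟩
      rw [Set.mem_sInter]
      intro S hSc
      rcases hchain.total hS₂c hSc with hsub | hsub
      · exact hsub hxS₂
      · have hmem : S ∩ {x | x ∈ p.support} ∈ A := ⟨S, hSc, rfl⟩
        have hsub' : S ∩ {x | x ∈ p.support} ⊆ T₀ := by
          rw [← hT₀]; exact Set.inter_subset_inter_left _ hsub
        have heq := hT₀min _ hmem hsub'
        have hxT₀ : x ∈ T₀ := by rw [← hT₀]; exact ⟨hxS₂, hxp⟩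
        have : x ∈ S ∩ {x | x ∈ p.support} := by
          have : T₀ = S ∩ {x | x ∈ p.support} := heq
          rwa [this] at hxT₀
        exact this.1
  obtain ⟨M, hMsub, hMmin⟩ := zorn_superset_nonempty 𝒮 H S₀ ⟨le_refl _, hS⟩
  refine ⟨M, hMmin.prop.1, hMmin.prop.2, ?_⟩
  intro S' hss hsep'
  have : S' ∈ 𝒮 := ⟨hss.subset.trans hMmin.prop.1, hsep'⟩
  exact absurd (hMmin.le_of_le this hss.subset) (by exact fun h => hss.ne (le_antisymm hss.subset h))

end SimpleGraph
namespace SimpleGraph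

theorem aux_bp_of_sep {V : Type*} {G : SimpleGraph V} (hconn : G.Connected) (m : ℕ)
    (hsep : ∀ (S : Set V) (a b : V), G.MinimalABSeparator S a b →
      ∀ x ∈ S, ∀ y ∈ S, G.dist x y ≤ m) :
    G.BP ((m : ℝ) + 2) := by
  intro a b hab p hp z hz _ γ
  by_contra hcon
  push_neg at hcon
  have key : ∀ w ∈ γ.support, m + 3 ≤ G.dist w z := by
    intro w hw
    have h2 : (m : ℝ) + 2 < (G.dist w z : ℝ) := hcon w hw
    have : (m + 2 : ℕ) < G.dist w z := by exact_mod_cast h2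
    omega
  have ha3 : m + 3 ≤ G.dist a z := key a γ.start_mem_support
  have hb3 : m + 3 ≤ G.dist b z := key b γ.end_mem_support
  have hp' : p.length = G.dist a b := hp
  obtain ⟨i, hi, hiz, hdaz, hdzb⟩ := aux_geodesic_support_dist hconn hp' hz
  have hzb : m + 3 ≤ G.dist z b := by rwa [dist_comm]
  have hsep₀ : G.Separates {v | G.dist a v = G.dist a z} a b := by
    refine ⟨?_, ?_, ?_⟩
    · simp only [Set.mem_setOf_eq, dist_self]; omega
    · simp only [Set.mem_setOf_eq]; omega
    · intro q
      exact aux_intermediate hconn a q (G.dist a z) (by simp [dist_self]) (by omega)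
  obtain ⟨S, hSsub, hMin⟩ := aux_exists_minimal_separator hsep₀
  obtain ⟨x, hxsupp, hxS⟩ := hMin.1.2.2 p
  obtain ⟨y, hysupp, hyS⟩ := hMin.1.2.2 γ
  have hx_eq : x = z := by
    obtain ⟨j, hj, hjx, hdax, _⟩ := aux_geodesic_support_dist hconn hp' hxsupp
    have hxh : G.dist a x = G.dist a z := hSsub hxS
    have : j = i := by omega
    rw [← hjx, this, hiz]
  have hxy := hsep S a b hMin x hxS y hyS
  have hyz := key y hysupp
  rw [hx_eq, dist_comm] at hxy
  omega

end SimpleGraph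

namespace SimpleGraph

section TreeConstruction

variable {V : Type*} (G : SimpleGraph V) (x₀ : V) (e : V → ℕ)

/-- Connectivity within the set of vertices at distance at least `n` from `x₀`. -/
def Rw (n : ℕ) (u v : V) : Prop := ∃ p : G.Walk u v, ∀ x ∈ p.support, n ≤ G.dist x₀ x

/-- Numerical code of the `Rw n`-class of `v`. -/
noncomputable def cc (n : ℕ) (v : V) : ℕ := sInf (e '' {u | Rw G x₀ n v u})

noncomputable def Fp (v : V) : ℕ × ℕ := (G.dist x₀ v, cc G x₀ e (G.dist x₀ v) v)

def TW : Type := {q : ℕ × ℕ // ∃ v, Fp G x₀ e v = q}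

def TDesc (s t : ℕ × ℕ) : Prop :=
  ∃ v w : V, Fp G x₀ e v = s ∧ Fp G x₀ e w = t ∧ Rw G x₀ t.1 v w

def TG : SimpleGraph (TW G x₀ e) where
  Adj s t := (s.1.1 = t.1.1 + 1 ∧ TDesc G x₀ e s.1 t.1) ∨
    (t.1.1 = s.1.1 + 1 ∧ TDesc G x₀ e t.1 s.1)
  symm := ⟨by intro s t h; tauto⟩
  loopless := ⟨by intro s h; rcases h with ⟨h, -⟩ | ⟨h, -⟩ <;> omega⟩

noncomputable def FpT (v : V) : TW G x₀ e := ⟨Fp G x₀ e v, ⟨v, rfl⟩⟩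

variable {G x₀ e}

lemma Rw_le_left {n : ℕ} {u v : V} (h : Rw G x₀ n u v) : n ≤ G.dist x₀ u := by
  obtain ⟨p, hp⟩ := h; exact hp u p.start_mem_support

lemma Rw_le_right {n : ℕ} {u v : V} (h : Rw G x₀ n u v) : n ≤ G.dist x₀ v := by
  obtain ⟨p, hp⟩ := h; exact hp v p.end_mem_support

lemma Rw_refl {n : ℕ} {v : V} (h : n ≤ G.dist x₀ v) : Rw G x₀ n v v :=
  ⟨Walk.nil, by simpa using h⟩

lemma Rw_symm {n : ℕ} {u v : V} (h : Rw G x₀ n u v) : Rw G x₀ n v u := by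
  obtain ⟨p, hp⟩ := h
  exact ⟨p.reverse, by
    intro x hx; rw [Walk.support_reverse, List.mem_reverse] at hx; exact hp x hx⟩

lemma Rw_trans {n : ℕ} {u v w : V} (h1 : Rw G x₀ n u v) (h2 : Rw G x₀ n v w) :
    Rw G x₀ n u w := by
  obtain ⟨p, hp⟩ := h1; obtain ⟨q, hq⟩ := h2
  refine ⟨p.append q, ?_⟩
  intro x hx
  rcases (Walk.mem_support_append_iff _ _).mp hx with h | h
  exacts [hp x h, hq x h]

lemma Rw_mono {n n' : ℕ} {u v : V} (hn : n' ≤ n) (h : Rw G x₀ n u v) : Rw G x₀ n' u v := by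
  obtain ⟨p, hp⟩ := h; exact ⟨p, fun x hx => le_trans hn (hp x hx)⟩

lemma cc_eq_of_Rw {n : ℕ} {u v : V} (h : Rw G x₀ n u v) :
    cc G x₀ e n u = cc G x₀ e n v := by
  have hset : {w | Rw G x₀ n u w} = {w | Rw G x₀ n v w} := by
    ext y
    exact ⟨fun hy => Rw_trans (Rw_symm h) hy, fun hy => Rw_trans h hy⟩
  unfold cc
  rw [hset]

lemma Rw_of_cc_eq (he : Function.Injective e) {n : ℕ} {u v : V} (hu : n ≤ G.dist x₀ u)
    (hv : n ≤ G.dist x₀ v) (h : cc G x₀ e n u = cc G x₀ e n v) : Rw G x₀ n u v := by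
  have h1 : cc G x₀ e n u ∈ e '' {w | Rw G x₀ n u w} :=
    Nat.sInf_mem ⟨e u, u, Rw_refl hu, rfl⟩
  have h2 : cc G x₀ e n v ∈ e '' {w | Rw G x₀ n v w} :=
    Nat.sInf_mem ⟨e v, v, Rw_refl hv, rfl⟩
  obtain ⟨w1, hw1, hew1⟩ := h1
  obtain ⟨w2, hw2, hew2⟩ := h2
  have hww : w1 = w2 := he (by rw [hew1, hew2, h])
  exact Rw_trans hw1 (hww ▸ Rw_symm hw2)

lemma Rw_of_Fp_eq (he : Function.Injective e) {u v : V}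
    (h : Fp G x₀ e u = Fp G x₀ e v) : Rw G x₀ (G.dist x₀ u) u v := by
  have h1 : G.dist x₀ u = G.dist x₀ v := congrArg Prod.fst h
  have h2 : cc G x₀ e (G.dist x₀ u) u = cc G x₀ e (G.dist x₀ v) v := congrArg Prod.snd h
  rw [← h1] at h2
  exact Rw_of_cc_eq he le_rfl (h1 ▸ le_rfl) h2

lemma exists_witness (hconn : G.Connected) :
    ∀ (k : ℕ) (v : V) (n : ℕ), G.dist x₀ v = n + k → ∃ u, G.dist x₀ u = n ∧ Rw G x₀ n v u := by
  intro k
  induction k with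
  | zero => intro v n h; exact ⟨v, by omega, Rw_refl (by omega)⟩
  | succ k ih =>
    intro v n h
    obtain ⟨p, hp⟩ := hconn.exists_walk_length_eq_dist v x₀
    have hlen : p.length = n + k + 1 := by rw [hp, dist_comm]; omega
    have h1 : 1 ≤ p.length := by omega
    obtain ⟨hd1, hd2⟩ := aux_geodesic_getVert hconn hp (i := 1) h1
    have hlv : G.dist x₀ (p.getVert 1) = n + k := by rw [dist_comm]; omega
    have hadj : G.Adj v (p.getVert 1) := by
      have := p.adj_getVert_succ (i := 0) (by omega)
      simpa using this
    have hR : Rw G x₀ (n + k) v (p.getVert 1) := by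
      refine ⟨Walk.cons hadj Walk.nil, ?_⟩
      intro x hx
      simp only [Walk.support_cons, Walk.support_nil, List.mem_cons,
        List.mem_singleton] at hx
      rcases hx with rfl | rfl | h
      · omega
      · omega
      · simp at h
    obtain ⟨u, hu1, hu2⟩ := ih (p.getVert 1) n hlv
    exact ⟨u, hu1, Rw_trans (Rw_mono (by omega) hR) hu2⟩

lemma TDesc_unique (he : Function.Injective e) {s t t' : ℕ × ℕ}
    (h1 : TDesc G x₀ e s t) (h2 : TDesc G x₀ e s t')
    (ht : s.1 = t.1 + 1) (ht' : s.1 = t'.1 + 1) : t = t' := by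
  obtain ⟨v, w, hv, hw, hR⟩ := h1
  obtain ⟨v', w', hv', hw', hR'⟩ := h2
  have hlv : G.dist x₀ v = s.1 := by rw [← hv]; rfl
  have hvv' : Rw G x₀ (G.dist x₀ v) v v' := Rw_of_Fp_eq he (hv.trans hv'.symm)
  have htt : t.1 = t'.1 := by omega
  have hRvv : Rw G x₀ t.1 v v' := Rw_mono (by omega) hvv'
  have hchain : Rw G x₀ t.1 w w' :=
    Rw_trans (Rw_symm hR) (Rw_trans hRvv (htt ▸ hR'))
  have hw1 : G.dist x₀ w = t.1 := by rw [← hw]; rfl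
  have hw1' : G.dist x₀ w' = t'.1 := by rw [← hw']; rfl
  have hw2 : t.2 = cc G x₀ e (G.dist x₀ w) w := by rw [← hw]; rfl
  have hw2' : t'.2 = cc G x₀ e (G.dist x₀ w') w' := by rw [← hw']; rfl
  have hsnd : t.2 = t'.2 := by
    rw [hw2, hw2', hw1, hw1', ← htt]
    exact cc_eq_of_Rw hchain
  exact Prod.ext htt hsnd

lemma twalk_to_Rw (he : Function.Injective e) {s t : TW G x₀ e}
    (p : (TG G x₀ e).Walk s t) :
    ∀ (v w : V), Fp G x₀ e v = s.1 → Fp G x₀ e w = t.1 →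
      ∃ j, j ≤ G.dist x₀ v ∧ j ≤ G.dist x₀ w ∧
        G.dist x₀ v + G.dist x₀ w ≤ p.length + 2 * j ∧ Rw G x₀ j v w := by
  induction p with
  | nil =>
    intro v w hv hw
    have hR : Rw G x₀ (G.dist x₀ v) v w := Rw_of_Fp_eq he (hv.trans hw.symm)
    have h1 : G.dist x₀ v = G.dist x₀ w := congrArg Prod.fst (hv.trans hw.symm)
    exact ⟨G.dist x₀ v, le_rfl, by omega, by simp; omega, hR⟩
  | @cons s s' t hadj q ih =>
    intro v w hv hw
    have hlv : G.dist x₀ v = s.1.1 := by rw [← hv]; rfl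
    rcases hadj with ⟨h1, hD⟩ | ⟨h1, hD⟩
    · obtain ⟨v₀, w₀, hv₀, hw₀, hR₀⟩ := hD
      obtain ⟨j, hj1, hj2, hj3, hjR⟩ := ih w₀ w hw₀ hw
      have hlw₀ : G.dist x₀ w₀ = s'.1.1 := by rw [← hw₀]; rfl
      have hvv₀ : Rw G x₀ (G.dist x₀ v) v v₀ := Rw_of_Fp_eq he (hv.trans hv₀.symm)
      have hvw₀ : Rw G x₀ s'.1.1 v w₀ :=
        Rw_trans (Rw_mono (by omega) hvv₀) hR₀
      have hfin : Rw G x₀ j v w := Rw_trans (Rw_mono (by omega) hvw₀) hjR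
      refine ⟨j, by omega, hj2, ?_, hfin⟩
      show _ ≤ q.length + 1 + 2 * j
      omega
    · obtain ⟨v₀, w₀, hv₀, hw₀, hR₀⟩ := hD
      obtain ⟨j, hj1, hj2, hj3, hjR⟩ := ih v₀ w hv₀ hw
      have hlv₀ : G.dist x₀ v₀ = s'.1.1 := by rw [← hv₀]; rfl
      have hvw₀ : Rw G x₀ (G.dist x₀ v) v w₀ := Rw_of_Fp_eq he (hv.trans hw₀.symm)
      have hvv₀ : Rw G x₀ s.1.1 v v₀ :=
        Rw_trans (Rw_mono (by omega) hvw₀) (Rw_symm hR₀)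
      rcases le_or_gt j s.1.1 with hc | hc
      · refine ⟨j, by omega, hj2, ?_, Rw_trans (Rw_mono hc hvv₀) hjR⟩
        show _ ≤ q.length + 1 + 2 * _
        omega
      · have hj' : j = s.1.1 + 1 := by omega
        refine ⟨s.1.1, by omega, by omega, ?_, Rw_trans hvv₀ (Rw_mono (by omega) hjR)⟩
        show _ ≤ q.length + 1 + 2 * _
        omega

lemma Rw_dist_bound (hconn : G.Connected) (Δ : ℕ) (hbp : G.BP ((Δ : ℕ) : ℝ))
    {j : ℕ} {v w : V} (h : Rw G x₀ j v w) :
    G.dist v w + 4 * j ≤ 2 * G.dist x₀ v + 2 * G.dist x₀ w + 6 * Δ + 2 := by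
  have hj1 := Rw_le_left h
  have hj2 := Rw_le_right h
  by_cases hvw : v = w
  · subst hvw; rw [dist_self]; omega
  obtain ⟨p, hp⟩ := hconn.exists_walk_length_eq_dist v w
  have hd1 : 1 ≤ G.dist v w := hconn.pos_dist_of_ne hvw
  have hip : (G.dist v w + 1) / 2 ≤ p.length := by omega
  obtain ⟨hz1, hz2⟩ := aux_geodesic_getVert hconn hp hip
  set z := p.getVert ((G.dist v w + 1) / 2) with hzdef
  have hmid : ((G.dist v z : ℤ) - (G.dist z w : ℤ)).natAbs ≤ 1 := by
    rw [hz1, hz2]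
    omega
  have hzmem : z ∈ p.support := Walk.mem_support_iff_exists_getVert.mpr ⟨_, rfl, hip⟩
  obtain ⟨γ, hγ⟩ := h
  obtain ⟨u, humem, hud⟩ := hbp v w hvw p hp z hzmem hmid γ
  have hud' : G.dist u z ≤ Δ := by exact_mod_cast hud
  have hxz : j ≤ G.dist x₀ z + Δ := by
    have h1 := hγ u humem
    have h2 := hconn.dist_triangle (u := x₀) (v := z) (w := u)
    have h3 : G.dist z u = G.dist u z := dist_comm
    omega
  obtain ⟨q1, hq1⟩ := hconn.exists_walk_length_eq_dist v x₀
  obtain ⟨q2, hq2⟩ := hconn.exists_walk_length_eq_dist x₀ w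
  obtain ⟨u₂, hu₂mem, hu₂d⟩ := hbp v w hvw p hp z hzmem hmid (q1.append q2)
  have hu₂d' : G.dist u₂ z ≤ Δ := by exact_mod_cast hu₂d
  rcases (Walk.mem_support_append_iff _ _).mp hu₂mem with hmem | hmem
  · obtain ⟨i₂, hi₂, _, ha1, ha2⟩ := aux_geodesic_support_dist hconn hq1 hmem
    have hq1l : q1.length = G.dist x₀ v := by rw [hq1]; exact dist_comm
    have hA : j + i₂ ≤ G.dist x₀ v + 2 * Δ := by
      have h2 := hconn.dist_triangle (u := x₀) (v := u₂) (w := z)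
      have h3 : G.dist x₀ u₂ = G.dist u₂ x₀ := dist_comm
      omega
    have hB : G.dist v z ≤ i₂ + Δ := by
      have h2 := hconn.dist_triangle (u := v) (v := u₂) (w := z)
      omega
    omega
  · obtain ⟨i₂, hi₂, _, ha1, ha2⟩ := aux_geodesic_support_dist hconn hq2 hmem
    have hq2l : q2.length = G.dist x₀ w := hq2
    have hA : j ≤ i₂ + 2 * Δ := by
      have h2 := hconn.dist_triangle (u := x₀) (v := u₂) (w := z)
      have h3 : G.dist u₂ z = G.dist z u₂ := dist_comm
      omega
    have hB : G.dist z w ≤ Δ + (q2.length - i₂) := by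
      have h2 := hconn.dist_triangle (u := z) (v := u₂) (w := w)
      have h3 : G.dist z u₂ = G.dist u₂ z := dist_comm
      omega
    omega

lemma exists_descend_walk (hconn : G.Connected) :
    ∀ (k : ℕ) (v : V) (j : ℕ), G.dist x₀ v = j + k →
      ∃ (t : TW G x₀ e) (p : (TG G x₀ e).Walk (FpT G x₀ e v) t),
        t.1 = (j, cc G x₀ e j v) ∧ p.length = k := by
  intro k
  induction k with
  | zero =>
    intro v j h
    refine ⟨FpT G x₀ e v, Walk.nil, ?_, rfl⟩
    have hj : G.dist x₀ v = j := by omega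
    show Fp G x₀ e v = (j, cc G x₀ e j v)
    rw [Fp, hj]
  | succ k ih =>
    intro v j h
    obtain ⟨u, hu1, hu2⟩ := exists_witness hconn 1 v (j + k) (show G.dist x₀ v = (j + k) + 1 by omega)
    obtain ⟨t, p, ht, hplen⟩ := ih u j (by omega)
    have hccu : cc G x₀ e j u = cc G x₀ e j v :=
      (cc_eq_of_Rw (Rw_mono (by omega) (Rw_symm hu2)))
    have hadj : (TG G x₀ e).Adj (FpT G x₀ e v) (FpT G x₀ e u) := by
      left
      constructor
      · show G.dist x₀ v = G.dist x₀ u + 1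
        omega
      · refine ⟨v, u, rfl, rfl, ?_⟩
        show Rw G x₀ (G.dist x₀ u) v u
        rw [hu1]; exact hu2
    refine ⟨t, Walk.cons hadj p, ?_, by rw [Walk.length_cons, hplen]⟩
    rw [ht, hccu]

lemma FpT_surj (t : TW G x₀ e) : ∃ v, FpT G x₀ e v = t := by
  obtain ⟨q, v, hv⟩ := t
  exact ⟨v, Subtype.ext hv⟩

lemma tg_connected (hconn : G.Connected) : (TG G x₀ e).Connected := by
  have hreach : ∀ v : V, (TG G x₀ e).Reachable (FpT G x₀ e v) (FpT G x₀ e x₀) := by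
    intro v
    obtain ⟨t, p, ht, hlen⟩ := exists_descend_walk hconn (G.dist x₀ v) v 0 (show G.dist x₀ v = 0 + G.dist x₀ v by omega)
    have htx : t = FpT G x₀ e x₀ := by
      apply Subtype.ext
      rw [ht]
      obtain ⟨q, hq⟩ := hconn.exists_walk_length_eq_dist v x₀
      have hcc : cc G x₀ e 0 v = cc G x₀ e 0 x₀ :=
        cc_eq_of_Rw ⟨q, fun x _ => Nat.zero_le _⟩
      show (0, cc G x₀ e 0 v) = Fp G x₀ e x₀
      rw [Fp, dist_self, hcc]
    exact ⟨htx ▸ p⟩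
  have hne : Nonempty (TW G x₀ e) := ⟨FpT G x₀ e x₀⟩
  refine Connected.mk ?_
  intro s t
  obtain ⟨v, rfl⟩ := FpT_surj s
  obtain ⟨w, rfl⟩ := FpT_surj t
  exact (hreach v).trans (hreach w).symm

lemma tparent_unique (he : Function.Injective e) {s t t' : TW G x₀ e}
    (h1 : (TG G x₀ e).Adj s t) (h2 : (TG G x₀ e).Adj s t')
    (ht : s.1.1 = t.1.1 + 1) (ht' : s.1.1 = t'.1.1 + 1) : t = t' := by
  rcases h1 with ⟨-, hD⟩ | ⟨hl, -⟩
  · rcases h2 with ⟨-, hD'⟩ | ⟨hl', -⟩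
    · exact Subtype.ext (TDesc_unique he hD hD' ht ht')
    · exfalso; omega
  · exfalso; omega

lemma aux_mem_tail {W' : Type*} {H : SimpleGraph W'} {v x : W'} {c : H.Walk v v}
    (hn : ¬c.Nil) (hx : x ∈ c.support) : x ∈ c.support.tail := by
  obtain ⟨u', hadj, q, rfl⟩ := Walk.not_nil_iff.mp hn
  rw [Walk.support_cons] at hx ⊢
  rcases List.mem_cons.mp hx with rfl | h
  · simpa using q.end_mem_support
  · simpa using h

lemma tg_acyclic (he : Function.Injective e) : (TG G x₀ e).IsAcyclic := by
  classical
  intro v₀ c₀ hc₀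
  obtain ⟨u, humem', humax'⟩ := Finset.exists_max_image c₀.support.toFinset
    (fun t : TW G x₀ e => t.1.1) ⟨v₀, List.mem_toFinset.mpr c₀.start_mem_support⟩
  have humem : u ∈ c₀.support := List.mem_toFinset.mp humem'
  have hc := hc₀.rotate humem
  set c := c₀.rotate u humem with hcdef
  have hmax : ∀ x ∈ c.support, x.1.1 ≤ u.1.1 := by
    intro x hx
    apply humax' x
    rw [List.mem_toFinset]
    have hx' : x ∈ c.support.tail := aux_mem_tail hc.not_nil hx
    have := (Walk.support_rotate c₀ u humem).mem_iff.mp hx'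
    exact List.mem_of_mem_tail this
  obtain ⟨w₁, hadj₁, q, hceq⟩ := Walk.not_nil_iff.mp hc.not_nil
  have hc' : (Walk.cons hadj₁ q).IsCycle := hceq ▸ hc
  rw [Walk.cons_isCycle_iff] at hc'
  have hql : 2 ≤ q.length := by
    have h3 := hc.three_le_length
    have hlc : (Walk.cons hadj₁ q).length = c.length := by rw [hceq]
    rw [Walk.length_cons] at hlc
    omega
  have hqnil : ¬q.reverse.Nil := by
    rw [Walk.not_nil_iff_lt_length, Walk.length_reverse]; omega
  obtain ⟨w₂, hadj₂, q₂, hq₂⟩ := Walk.not_nil_iff.mp hqnil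
  have hne : w₁ ≠ w₂ := by
    rintro rfl
    apply hc'.2
    have hmem : s(u, w₁) ∈ q.reverse.edges := by
      rw [hq₂, Walk.edges_cons]; exact List.mem_cons_self
    rwa [Walk.edges_reverse, List.mem_reverse] at hmem
  have hw₁mem : w₁ ∈ c.support := by
    rw [hceq, Walk.support_cons]; exact List.mem_cons_of_mem _ q.start_mem_support
  have hw₂mem : w₂ ∈ c.support := by
    have hmem : w₂ ∈ q.reverse.support := by
      rw [hq₂, Walk.support_cons]; exact List.mem_cons_of_mem _ q₂.start_mem_support
    rw [Walk.support_reverse, List.mem_reverse] at hmem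
    rw [hceq, Walk.support_cons]
    exact List.mem_cons_of_mem _ hmem
  have hlev : ∀ {s t : TW G x₀ e}, (TG G x₀ e).Adj s t →
      s.1.1 = t.1.1 + 1 ∨ t.1.1 = s.1.1 + 1 := by
    intro s t hst
    rcases hst with ⟨hh, -⟩ | ⟨hh, -⟩
    exacts [Or.inl hh, Or.inr hh]
  have h1 := hlev hadj₁
  have h2 := hlev hadj₂
  have hm1 := hmax w₁ hw₁mem
  have hm2 := hmax w₂ hw₂mem
  exact hne (tparent_unique he hadj₁ hadj₂ (by omega) (by omega))

lemma tdist_le_four (hconn : G.Connected) (v w : V) :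
    (TG G x₀ e).dist (FpT G x₀ e v) (FpT G x₀ e w) ≤ 4 * G.dist v w := by
  obtain ⟨p, hp⟩ := hconn.exists_walk_length_eq_dist v w
  have hM1 := min_le_left (G.dist x₀ v) (G.dist x₀ w)
  have hM2 := min_le_right (G.dist x₀ v) (G.dist x₀ w)
  set j := min (G.dist x₀ v) (G.dist x₀ w) - G.dist v w with hjdef
  have hjv : j ≤ G.dist x₀ v := by omega
  have hjw : j ≤ G.dist x₀ w := by omega
  have hRw : Rw G x₀ j v w := by
    refine ⟨p, ?_⟩
    intro x hx
    obtain ⟨i₂, hi₂, _, ha1, ha2⟩ := aux_geodesic_support_dist hconn hp hx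
    have htri := hconn.dist_triangle (u := x₀) (v := x) (w := v)
    have hcomm : G.dist x v = G.dist v x := dist_comm
    omega
  obtain ⟨t1, p1, ht1, hlen1⟩ := exists_descend_walk (G := G) (x₀ := x₀) (e := e) hconn
    (G.dist x₀ v - j) v j (show G.dist x₀ v = j + (G.dist x₀ v - j) by omega)
  obtain ⟨t2, p2, ht2, hlen2⟩ := exists_descend_walk (G := G) (x₀ := x₀) (e := e) hconn
    (G.dist x₀ w - j) w j (show G.dist x₀ w = j + (G.dist x₀ w - j) by omega)
  have hteq : t1 = t2 := by
    apply Subtype.ext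
    rw [ht1, ht2, cc_eq_of_Rw hRw]
  have hdle := dist_le (p1.append ((p2.reverse).copy hteq.symm rfl))
  rw [Walk.length_append, Walk.length_copy, Walk.length_reverse, hlen1, hlen2] at hdle
  have htri1 := hconn.dist_triangle (u := x₀) (v := w) (w := v)
  have htri2 := hconn.dist_triangle (u := x₀) (v := v) (w := w)
  have hc1 : G.dist w v = G.dist v w := dist_comm
  rcases min_choice (G.dist x₀ v) (G.dist x₀ w) with hM | hM <;> omega

end TreeConstruction

end SimpleGraph

namespace SimpleGraph

lemma aux_countable {V : Type*} {G : SimpleGraph V} (hconn : G.Connected) {μ : ℕ}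
    (hμ : G.UniformGraph μ) : Countable V := by
  obtain ⟨x₀⟩ := hconn.nonempty
  have hball : ∀ n : ℕ, {v : V | G.dist x₀ v ≤ n}.Finite := by
    intro n
    induction n with
    | zero =>
      apply Set.Finite.subset (Set.finite_singleton x₀)
      intro v hv
      simp only [Set.mem_setOf_eq, Nat.le_zero] at hv
      simp only [Set.mem_singleton_iff]
      exact (hconn.dist_eq_zero_iff.mp hv).symm
    | succ n ih =>
      apply Set.Finite.subset (ih.union (Set.Finite.biUnion ih (fun u _ => (hμ u).1)))
      intro v hv
      simp only [Set.mem_setOf_eq] at hv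
      by_cases hle : G.dist x₀ v ≤ n
      · exact Or.inl hle
      · have hd : G.dist x₀ v = n + 1 := by omega
        obtain ⟨p, hp⟩ := hconn.exists_walk_length_eq_dist x₀ v
        have hlen : p.length = n + 1 := by rw [hp, hd]
        obtain ⟨h1, h2⟩ := aux_geodesic_getVert hconn hp (i := n) (by omega)
        right
        refine Set.mem_biUnion (show G.dist x₀ (p.getVert n) ≤ n by omega) ?_
        have hadj := p.adj_getVert_succ (i := n) (by omega)
        rw [show p.getVert (n + 1) = v from by rw [← hlen]; exact p.getVert_length] at hadj
        exact hadj
  have huniv : (Set.univ : Set V).Countable := by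
    apply Set.Countable.mono (show Set.univ ⊆ ⋃ n : ℕ, {v : V | G.dist x₀ v ≤ n} from ?_)
    · exact Set.countable_iUnion (fun n => (hball n).countable)
    · intro v _
      exact Set.mem_iUnion.mpr ⟨G.dist x₀ v, Set.mem_setOf_eq ▸ le_rfl⟩
  exact Set.countable_univ_iff.mp huniv

end SimpleGraph

/-- If `G` is uniform and every minimal vertex separator has diameter at
most `m`, then `G` satisfies (BP) with constant `Δ = m + 2` (hence is quasi-isometric
to a tree). -/
theorem separators_small_implies_bp {V : Type*} (G : SimpleGraph V)
    (hconn : G.Connected) (μ : ℕ) (hμ : G.UniformGraph μ) (m : ℕ)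
    (hsep : ∀ (S : Set V) (a b : V), G.MinimalABSeparator S a b →
      ∀ x ∈ S, ∀ y ∈ S, G.dist x y ≤ m) :
    G.BP ((m : ℝ) + 2) ∧ G.QIToTree := by
  have hbp : G.BP ((m : ℝ) + 2) := SimpleGraph.aux_bp_of_sep hconn m hsep
  refine ⟨hbp, ?_⟩
  have hcount : Countable V := SimpleGraph.aux_countable hconn hμ
  obtain ⟨e, he⟩ := Countable.exists_injective_nat V
  obtain ⟨x₀⟩ := hconn.nonempty
  have hbpn : G.BP (((m + 2 : ℕ) : ℕ) : ℝ) := by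
    have hc : (((m + 2 : ℕ) : ℕ) : ℝ) = (m : ℝ) + 2 := by push_cast; ring
    rw [hc]; exact hbp
  refine ⟨SimpleGraph.TW G x₀ e, SimpleGraph.TG G x₀ e, SimpleGraph.FpT G x₀ e,
    4, (6 * m + 14 : ℝ), 0, ⟨SimpleGraph.tg_connected hconn, SimpleGraph.tg_acyclic he⟩,
    by norm_num, by positivity, le_refl 0, ?_, ?_⟩
  · intro x y
    constructor
    · -- lower bound
      obtain ⟨p, hp⟩ := (SimpleGraph.tg_connected (x₀ := x₀) (e := e) hconn).exists_walk_length_eq_dist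
        (SimpleGraph.FpT G x₀ e x) (SimpleGraph.FpT G x₀ e y)
      obtain ⟨j, hj1, hj2, hj3, hjR⟩ := SimpleGraph.twalk_to_Rw he p x y rfl rfl
      have hbd := SimpleGraph.Rw_dist_bound hconn (m + 2) hbpn hjR
      rw [hp] at hj3
      have hN : G.dist x y ≤
          2 * (SimpleGraph.TG G x₀ e).dist (SimpleGraph.FpT G x₀ e x) (SimpleGraph.FpT G x₀ e y)
          + (6 * m + 14) := by omega
      have hNR : (G.dist x y : ℝ) ≤
          2 * ((SimpleGraph.TG G x₀ e).dist (SimpleGraph.FpT G x₀ e x) (SimpleGraph.FpT G x₀ e y) : ℝ)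
          + (6 * (m : ℝ) + 14) := by exact_mod_cast hN
      have hT0 : (0 : ℝ) ≤
          ((SimpleGraph.TG G x₀ e).dist (SimpleGraph.FpT G x₀ e x) (SimpleGraph.FpT G x₀ e y) : ℝ) :=
        Nat.cast_nonneg _
      linarith
    · -- upper bound
      have hub := SimpleGraph.tdist_le_four (x₀ := x₀) (e := e) hconn x y
      have hubR : (((SimpleGraph.TG G x₀ e).dist (SimpleGraph.FpT G x₀ e x)
          (SimpleGraph.FpT G x₀ e y)) : ℝ) ≤ 4 * (G.dist x y : ℝ) := by exact_mod_cast hub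
      have hm0 : (0 : ℝ) ≤ 6 * (m : ℝ) + 14 := by positivity
      linarith
  · intro t
    obtain ⟨v, hv⟩ := SimpleGraph.FpT_surj t
    refine ⟨v, ?_⟩
    rw [hv]
    simp [SimpleGraph.dist_self]
end

section
/- Let G be a uniform graph, r ≥ 2, a,b vertices with d(a,b) > r, [ab] a geodesic, and v₁,v₂ ∈ [ab] vertices distinct from a,b with d(v₁,v₂) = r−1. Then there exists a minimal ab-r-separator containing {v₁, v₂}. -/
namespace SimpleGraph

variable {V : Type*} (G : SimpleGraph V)

/-- There is a walk from `a` to `v` avoiding `S`, i.e. `v` is in the component of `a`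
in `G \ S`. -/
def ReachAvoiding (S : Set V) (a v : V) : Prop :=
  ∃ p : G.Walk a v, ∀ x ∈ p.support, x ∉ S

/-- `S` `r`-separates `a` and `b`: every vertex of the component of `a` in `G \ S`
is at distance greater than `r` from every vertex of the component of `b`. -/
def RSeparates (S : Set V) (r : ℕ) (a b : V) : Prop :=
  a ∉ S ∧ b ∉ S ∧
    ∀ v w : V, G.ReachAvoiding S a v → G.ReachAvoiding S b w → r < G.dist v w

/-- `S` is a minimal `ab`-`r`-separator. -/
def MinimalRSeparator (S : Set V) (r : ℕ) (a b : V) : Prop :=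
  G.RSeparates S r a b ∧ ∀ S' : Set V, S' ⊂ S → ¬ G.RSeparates S' r a b

end SimpleGraph


section Aux

namespace SimpleGraph

variable {V : Type*} [DecidableEq V] {G : SimpleGraph V}

/-- Splitting a geodesic at a support vertex realizes both distances. -/
lemma geo_split (hconn : G.Connected) {a b x : V} (p : G.Walk a b)
    (hp : p.length = G.dist a b) (hx : x ∈ p.support) :
    (p.takeUntil x hx).length = G.dist a x ∧ (p.dropUntil x hx).length = G.dist x b := by
  have h1 := SimpleGraph.dist_le (p.takeUntil x hx)
  have h2 := SimpleGraph.dist_le (p.dropUntil x hx)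
  have h3 : (p.takeUntil x hx).length + (p.dropUntil x hx).length = p.length := by
    conv_rhs => rw [← p.take_spec hx]
    rw [Walk.length_append]
  have h4 := hconn.dist_triangle (u := a) (v := x) (w := b)
  omega

/-- Reaching a geodesic vertex from `a`, avoiding a set of vertices no closer to `a`. -/
lemma reach_prefix (hconn : G.Connected) {a b v : V} (p : G.Walk a b)
    (hp : p.length = G.dist a b) (hv : v ∈ p.support) (S : Set V)
    (hS : ∀ x ∈ S, G.dist a v ≤ G.dist a x) :
    (v ∉ S → G.ReachAvoiding S a v) ∧
    (v ≠ a → ∃ u, G.Adj u v ∧ G.ReachAvoiding S a u) := by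
  obtain ⟨ht, _⟩ := geo_split hconn p hp hv
  constructor
  · intro hvS
    refine ⟨p.takeUntil v hv, fun x hx hxS => ?_⟩
    obtain ⟨ha1, ha2⟩ := geo_split hconn (p.takeUntil v hv) ht hx
    have hsum : ((p.takeUntil v hv).takeUntil x hx).length
        + ((p.takeUntil v hv).dropUntil x hx).length = (p.takeUntil v hv).length := by
      conv_rhs => rw [← (p.takeUntil v hv).take_spec hx]
      rw [Walk.length_append]
    have hge := hS x hxS
    have hxv : G.dist x v = 0 := by omega
    rw [hconn.dist_eq_zero_iff] at hxv
    exact hvS (hxv ▸ hxS)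
  · intro hva
    obtain ⟨u, hadj, q, hq⟩ := Walk.exists_eq_cons_of_ne hva (p.takeUntil v hv).reverse
    refine ⟨u, hadj.symm, q.reverse, fun x hx hxS => ?_⟩
    rw [Walk.support_reverse, List.mem_reverse] at hx
    have h1 := Walk.length_dropUntil_le q hx
    have h2 : q.length + 1 = (p.takeUntil v hv).reverse.length := by
      rw [hq, Walk.length_cons]
    rw [Walk.length_reverse, ht] at h2
    have h3 : G.dist x a ≤ (q.dropUntil x hx).length := SimpleGraph.dist_le _
    have h4 := hS x hxS
    have h5 : G.dist a x = G.dist x a := SimpleGraph.dist_comm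
    omega

/-- Reaching a geodesic vertex from `b`, avoiding a set of vertices no farther from `a`. -/
lemma reach_suffix (hconn : G.Connected) {a b v : V} (p : G.Walk a b)
    (hp : p.length = G.dist a b) (hv : v ∈ p.support) (S : Set V)
    (hS : ∀ x ∈ S, G.dist a x ≤ G.dist a v) :
    (v ∉ S → G.ReachAvoiding S b v) ∧
    (v ≠ b → ∃ w, G.Adj v w ∧ G.ReachAvoiding S b w) := by
  obtain ⟨ht, hdl⟩ := geo_split hconn p hp hv
  have hsum0 : (p.takeUntil v hv).length + (p.dropUntil v hv).length = p.length := by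
    conv_rhs => rw [← p.take_spec hv]
    rw [Walk.length_append]
  constructor
  · intro hvS
    refine ⟨(p.dropUntil v hv).reverse, fun x hx hxS => ?_⟩
    rw [Walk.support_reverse, List.mem_reverse] at hx
    obtain ⟨hb1, hb2⟩ := geo_split hconn (p.dropUntil v hv) hdl hx
    have hsum : ((p.dropUntil v hv).takeUntil x hx).length
        + ((p.dropUntil v hv).dropUntil x hx).length = (p.dropUntil v hv).length := by
      conv_rhs => rw [← (p.dropUntil v hv).take_spec hx]
      rw [Walk.length_append]
    have htr := hconn.dist_triangle (u := a) (v := x) (w := b)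
    have hle := hS x hxS
    have hxv : G.dist v x = 0 := by omega
    rw [hconn.dist_eq_zero_iff] at hxv
    exact hvS (hxv ▸ hxS)
  · intro hvb
    obtain ⟨w, hadj, q, hq⟩ := Walk.exists_eq_cons_of_ne hvb (p.dropUntil v hv)
    refine ⟨w, hadj, q.reverse, fun x hx hxS => ?_⟩
    rw [Walk.support_reverse, List.mem_reverse] at hx
    have h1 := Walk.length_dropUntil_le q hx
    have h2 : q.length + 1 = (p.dropUntil v hv).length := by
      rw [hq, Walk.length_cons]
    have h3 : G.dist x b ≤ (q.dropUntil x hx).length := SimpleGraph.dist_le _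
    have htr := hconn.dist_triangle (u := a) (v := x) (w := b)
    have hle := hS x hxS
    omega

/-- Walking from inside the inner ball while avoiding the annulus keeps one inside. -/
lemma walk_avoid_lt (hconn : G.Connected) (a : V) (i j : ℕ) (hij : i ≤ j) :
    ∀ {u x : V} (w : G.Walk u x), G.dist a u < i →
      (∀ y ∈ w.support, ¬(i ≤ G.dist a y ∧ G.dist a y ≤ j)) → G.dist a x < i := by
  intro u x w
  induction w with
  | nil => exact fun h _ => h
  | @cons u u' x hadj q ih =>
    intro h hsup
    refine ih ?_ (fun y hy => hsup y (by simp [hy]))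
    have h1 : G.dist u u' ≤ 1 := by
      simpa using SimpleGraph.dist_le (Walk.cons hadj Walk.nil)
    have h2 := hconn.dist_triangle (u := a) (v := u) (w := u')
    have h3 := hsup u' (by simp)
    omega

/-- Walking from outside the outer ball while avoiding the annulus keeps one outside. -/
lemma walk_avoid_gt (hconn : G.Connected) (a : V) (i j : ℕ) (hij : i ≤ j) :
    ∀ {u x : V} (w : G.Walk u x), j < G.dist a u →
      (∀ y ∈ w.support, ¬(i ≤ G.dist a y ∧ G.dist a y ≤ j)) → j < G.dist a x := by
  intro u x w
  induction w with
  | nil => exact fun h _ => h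
  | @cons u u' x hadj q ih =>
    intro h hsup
    refine ih ?_ (fun y hy => hsup y (by simp [hy]))
    have h1 : G.dist u' u ≤ 1 := by
      simpa using SimpleGraph.dist_le (Walk.cons hadj.symm Walk.nil)
    have h2 := hconn.dist_triangle (u := a) (v := u') (w := u)
    have h3 := hsup u' (by simp)
    omega

/-- In a nonempty chain of sets, a finite list avoided pointwise is avoided by one set. -/
lemma chain_avoid {c : Set (Set V)} (hchain : IsChain (· ⊆ ·) c) (hne : c.Nonempty)
    (l : List V) (h : ∀ x ∈ l, x ∉ ⋂₀ c) : ∃ T ∈ c, ∀ x ∈ l, x ∉ T := by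
  induction l with
  | nil => exact ⟨hne.choose, hne.choose_spec, by simp⟩
  | cons x l ih =>
    obtain ⟨T₁, hT₁, hT₁l⟩ := ih (fun y hy => h y (List.mem_cons_of_mem _ hy))
    obtain ⟨T₂, hT₂, hxT₂⟩ : ∃ T ∈ c, x ∉ T := by
      have hx := h x List.mem_cons_self
      simpa [Set.mem_sInter] using hx
    rcases eq_or_ne T₁ T₂ with rfl | hne'
    · exact ⟨T₁, hT₁, by
        intro y hy
        rcases List.mem_cons.mp hy with rfl | hy
        · exact hxT₂
        · exact hT₁l y hy⟩
    rcases hchain hT₁ hT₂ hne' with hsub | hsub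
    · refine ⟨T₁, hT₁, ?_⟩
      intro y hy
      rcases List.mem_cons.mp hy with rfl | hy
      · exact fun hmem => hxT₂ (hsub hmem)
      · exact hT₁l y hy
    · refine ⟨T₂, hT₂, ?_⟩
      intro y hy
      rcases List.mem_cons.mp hy with rfl | hy
      · exact hxT₂
      · exact fun hmem => hT₁l y hy (hsub hmem)

/-- Main auxiliary lemma, assuming `v₁` is the closer of the two vertices to `a`. -/
lemma aux_sep (hconn : G.Connected) (r : ℕ) (hr : 2 ≤ r)
    (a b : V) (hd : r < G.dist a b) (p : G.Walk a b) (hp : p.length = G.dist a b)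
    (v₁ v₂ : V) (hv₁ : v₁ ∈ p.support) (hv₂ : v₂ ∈ p.support)
    (hv₁a : v₁ ≠ a) (hv₂b : v₂ ≠ b)
    (hd12 : G.dist v₁ v₂ = r - 1)
    (hij : G.dist a v₂ = G.dist a v₁ + (r - 1)) :
    ∃ S : Set V, v₁ ∈ S ∧ v₂ ∈ S ∧ G.MinimalRSeparator S r a b := by
  set i := G.dist a v₁ with hidef
  set j := G.dist a v₂ with hjdef
  have hi1 : 1 ≤ i := hconn.pos_dist_of_ne (Ne.symm hv₁a)
  have hjD : j < G.dist a b := by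
    obtain ⟨ht, hdl⟩ := geo_split hconn p hp hv₂
    have hsum : (p.takeUntil v₂ hv₂).length + (p.dropUntil v₂ hv₂).length = p.length := by
      conv_rhs => rw [← p.take_spec hv₂]
      rw [Walk.length_append]
    have hb1 : 1 ≤ G.dist v₂ b := hconn.pos_dist_of_ne hv₂b
    omega
  have hij' : i ≤ j := by omega
  set A : Set V := {x | i ≤ G.dist a x ∧ G.dist a x ≤ j} with hAdef
  have hAsep : G.RSeparates A r a b := by
    refine ⟨?_, ?_, ?_⟩
    · intro hmem
      have := hmem.1
      rw [SimpleGraph.dist_self] at this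
      omega
    · intro hmem
      have := hmem.2
      omega
    · rintro v w ⟨pv, hpv⟩ ⟨pw, hpw⟩
      have hv' : G.dist a v < i := by
        refine walk_avoid_lt hconn a i j hij' pv ?_ ?_
        · rw [SimpleGraph.dist_self]; omega
        · exact fun y hy => hpv y hy
      have hw' : j < G.dist a w := by
        refine walk_avoid_gt hconn a i j hij' pw hjD (fun y hy => hpw y hy)
      have htr := hconn.dist_triangle (u := a) (v := v) (w := w)
      omega
  -- Zorn's lemma on separators contained in A
  set F : Set (Set V) := {S' | S' ⊆ A ∧ G.RSeparates S' r a b} with hFdef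
  have hchains : ∀ c ⊆ F, IsChain (· ⊆ ·) c → c.Nonempty →
      ∃ lb ∈ F, ∀ s ∈ c, lb ⊆ s := by
    intro c hcF hchain hne
    obtain ⟨T, hT⟩ := hne
    refine ⟨⋂₀ c, ⟨?_, ?_, ?_, ?_⟩, fun s hs => Set.sInter_subset_of_mem hs⟩
    · exact (Set.sInter_subset_of_mem hT).trans (hcF hT).1
    · intro hmem
      exact (hcF hT).2.1 (hmem T hT)
    · intro hmem
      exact (hcF hT).2.2.1 (hmem T hT)
    · rintro v w ⟨pv, hpv⟩ ⟨pw, hpw⟩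
      obtain ⟨T', hT', hT'avoid⟩ := chain_avoid hchain ⟨T, hT⟩ (pv.support ++ pw.support)
        (by
          intro x hx
          rcases List.mem_append.mp hx with hx | hx
          · exact hpv x hx
          · exact hpw x hx)
      refine (hcF hT').2.2.2 v w ⟨pv, fun x hx => hT'avoid x (List.mem_append.mpr (Or.inl hx))⟩
        ⟨pw, fun x hx => hT'avoid x (List.mem_append.mpr (Or.inr hx))⟩
  obtain ⟨m, hmA0, hmin⟩ := zorn_superset_nonempty F hchains A ⟨le_refl A, hAsep⟩
  have hmF : m ∈ F := hmin.prop
  have hmA : m ⊆ A := hmF.1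
  have hmsep : G.RSeparates m r a b := hmF.2
  -- v₁ ∈ m
  have hv1m : v₁ ∈ m := by
    by_contra h1
    have hra : G.ReachAvoiding m a v₁ :=
      (reach_prefix hconn p hp hv₁ m (fun x hx => (hmA hx).1)).1 h1
    by_cases h2 : v₂ ∈ m
    · obtain ⟨w, hadj, hrb⟩ :=
        (reach_suffix hconn p hp hv₂ m (fun x hx => (hmA hx).2)).2 hv₂b
      have hgt := hmsep.2.2 v₁ w hra hrb
      have hle : G.dist v₂ w ≤ 1 := by
        simpa using SimpleGraph.dist_le (Walk.cons hadj Walk.nil)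
      have htr := hconn.dist_triangle (u := v₁) (v := v₂) (w := w)
      omega
    · have hrb : G.ReachAvoiding m b v₂ :=
        (reach_suffix hconn p hp hv₂ m (fun x hx => (hmA hx).2)).1 h2
      have hgt := hmsep.2.2 v₁ v₂ hra hrb
      omega
  -- v₂ ∈ m
  have hv2m : v₂ ∈ m := by
    by_contra h2
    have hrb : G.ReachAvoiding m b v₂ :=
      (reach_suffix hconn p hp hv₂ m (fun x hx => (hmA hx).2)).1 h2
    obtain ⟨u, hadj, hra⟩ :=
      (reach_prefix hconn p hp hv₁ m (fun x hx => (hmA hx).1)).2 hv₁a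
    have hgt := hmsep.2.2 u v₂ hra hrb
    have hle : G.dist u v₁ ≤ 1 := by
      simpa using SimpleGraph.dist_le (Walk.cons hadj Walk.nil)
    have htr := hconn.dist_triangle (u := u) (v := v₁) (w := v₂)
    omega
  refine ⟨m, hv1m, hv2m, hmsep, ?_⟩
  intro S' hsub hsep
  have hS'F : S' ∈ F := ⟨hsub.subset.trans hmA, hsep⟩
  exact hsub.2 (hmin.2 hS'F hsub.subset)

end SimpleGraph

end Aux

/-- In a uniform connected graph, given `r ≥ 2`, vertices `a,b` with
`d(a,b) > r`, a geodesic `[ab]`, and vertices `v₁, v₂` of it distinct from `a,b` with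
`d(v₁,v₂) = r - 1`, there is a minimal `ab`-`r`-separator containing `{v₁, v₂}`. -/
theorem exists_minimal_r_separator {V : Type*} (G : SimpleGraph V)
    (hconn : G.Connected) (μ : ℕ) (hμ : G.UniformGraph μ) (r : ℕ) (hr : 2 ≤ r)
    (a b : V) (hd : r < G.dist a b) (p : G.Walk a b) (hp : G.IsGeodesic p)
    (v₁ v₂ : V) (hv₁ : v₁ ∈ p.support) (hv₂ : v₂ ∈ p.support)
    (hv₁a : v₁ ≠ a) (hv₁b : v₁ ≠ b) (hv₂a : v₂ ≠ a) (hv₂b : v₂ ≠ b)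
    (hdist : G.dist v₁ v₂ = r - 1) :
    ∃ S : Set V, v₁ ∈ S ∧ v₂ ∈ S ∧ G.MinimalRSeparator S r a b := by
  classical
  have hp' : p.length = G.dist a b := hp
  have hsplit : G.dist a v₂ = G.dist a v₁ + (r - 1) ∨
      G.dist a v₁ = G.dist a v₂ + (r - 1) := by
    have hv₁' := hv₁
    rw [← p.take_spec hv₂, SimpleGraph.Walk.mem_support_append_iff] at hv₁'
    obtain ⟨ht2, hd2⟩ := SimpleGraph.geo_split hconn p hp' hv₂
    rcases hv₁' with hcase | hcase
    · left
      obtain ⟨ha1, ha2⟩ := SimpleGraph.geo_split hconn (p.takeUntil v₂ hv₂) ht2 hcase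
      have hsum : ((p.takeUntil v₂ hv₂).takeUntil v₁ hcase).length
          + ((p.takeUntil v₂ hv₂).dropUntil v₁ hcase).length
          = (p.takeUntil v₂ hv₂).length := by
        conv_rhs => rw [← (p.takeUntil v₂ hv₂).take_spec hcase]
        rw [SimpleGraph.Walk.length_append]
      omega
    · right
      obtain ⟨hb1, hb2⟩ := SimpleGraph.geo_split hconn (p.dropUntil v₂ hv₂) hd2 hcase
      have hsum : ((p.dropUntil v₂ hv₂).takeUntil v₁ hcase).length
          + ((p.dropUntil v₂ hv₂).dropUntil v₁ hcase).length
          = (p.dropUntil v₂ hv₂).length := by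
        conv_rhs => rw [← (p.dropUntil v₂ hv₂).take_spec hcase]
        rw [SimpleGraph.Walk.length_append]
      obtain ⟨hc1, hc2⟩ := SimpleGraph.geo_split hconn p hp' hv₁
      have hsum2 : (p.takeUntil v₁ hv₁).length + (p.dropUntil v₁ hv₁).length = p.length := by
        conv_rhs => rw [← p.take_spec hv₁]
        rw [SimpleGraph.Walk.length_append]
      have hsum3 : (p.takeUntil v₂ hv₂).length + (p.dropUntil v₂ hv₂).length = p.length := by
        conv_rhs => rw [← p.take_spec hv₂]
        rw [SimpleGraph.Walk.length_append]
      have hcm : G.dist v₂ v₁ = r - 1 := by rw [SimpleGraph.dist_comm]; exact hdist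
      omega
  rcases hsplit with hij | hij
  · exact SimpleGraph.aux_sep hconn r hr a b hd p hp' v₁ v₂ hv₁ hv₂ hv₁a hv₂b hdist hij
  · obtain ⟨S, h2, h1, hmin⟩ := SimpleGraph.aux_sep hconn r hr a b hd p hp' v₂ v₁ hv₂ hv₁
      hv₂a hv₁b (by rw [SimpleGraph.dist_comm]; exact hdist) hij
    exact ⟨S, h1, h2, hmin⟩
end

section
/- Let G be a uniform graph and r ≥ 2. If every minimal vertex r-separator of G has diameter at most m with m ≤ r, then G is (r+1/2)-densely (2r+2, r)-chordal. -/
namespace RSepAux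

open SimpleGraph

variable {V : Type*} {G : SimpleGraph V}

/-- Segment of a walk between indices `i ≤ j`, with control over vertices and edges. -/
lemma exists_seg {a b : V} (w : G.Walk a b) :
    ∀ i j : ℕ, i ≤ j → j ≤ w.length →
      ∃ p : G.Walk (w.getVert i) (w.getVert j), p.length = j - i ∧
        (∀ z ∈ p.support, ∃ t, i ≤ t ∧ t ≤ j ∧ z = w.getVert t) ∧
        (∀ e ∈ p.edges, e ∈ w.edges) := by
  induction w with
  | nil =>
    intro i j hij hj
    simp only [SimpleGraph.Walk.length_nil, Nat.le_zero] at hj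
    subst hj
    simp only [Nat.le_zero] at hij
    subst hij
    exact ⟨SimpleGraph.Walk.nil, by simp, by simp, by simp⟩
  | cons h w ih =>
    intro i j hij hj
    match i, j with
    | 0, 0 =>
      refine ⟨(SimpleGraph.Walk.nil).copy (w.cons h).getVert_zero.symm rfl, by simp, ?_, by simp⟩
      intro z hz
      erw [SimpleGraph.Walk.support_copy] at hz
      simp only [SimpleGraph.Walk.support_nil,
        List.mem_singleton] at hz
      exact ⟨0, le_rfl, le_rfl, hz⟩
    | 0, j + 1 =>
      obtain ⟨p, hp1, hp2, hp3⟩ := ih 0 j (Nat.zero_le _) (by simpa using hj)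
      refine ⟨((SimpleGraph.Walk.cons h (p.copy w.getVert_zero rfl)).copy
        (w.cons h).getVert_zero.symm
        (by rw [SimpleGraph.Walk.getVert_cons_succ])), by erw [SimpleGraph.Walk.length_copy]; simpa using hp1, ?_, ?_⟩
      · intro z hz
        simp only [SimpleGraph.Walk.support_copy, SimpleGraph.Walk.support_cons,
          List.mem_cons] at hz
        rcases hz with rfl | hz
        · exact ⟨0, le_rfl, Nat.zero_le _, ((w.cons h).getVert_zero).symm⟩
        · obtain ⟨t, ht1, ht2, ht3⟩ := hp2 z hz
          exact ⟨t + 1, by omega, by omega,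
            by rw [SimpleGraph.Walk.getVert_cons_succ]; exact ht3⟩
      · intro e he
        simp only [SimpleGraph.Walk.edges_copy, SimpleGraph.Walk.edges_cons,
          List.mem_cons] at he
        rcases he with rfl | he
        · simp [SimpleGraph.Walk.edges_cons]
        · simp only [SimpleGraph.Walk.edges_cons, List.mem_cons]
          exact Or.inr (hp3 e he)
    | i + 1, j + 1 =>
      obtain ⟨p, hp1, hp2, hp3⟩ := ih i j (Nat.le_of_succ_le_succ hij) (by simpa using hj)
      refine ⟨p.copy (by rw [SimpleGraph.Walk.getVert_cons_succ])
        (by rw [SimpleGraph.Walk.getVert_cons_succ]), by simpa using hp1, ?_, ?_⟩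
      · intro z hz
        rw [SimpleGraph.Walk.support_copy] at hz
        obtain ⟨t, ht1, ht2, ht3⟩ := hp2 z hz
        exact ⟨t + 1, by omega, by omega,
          by rw [SimpleGraph.Walk.getVert_cons_succ]; exact ht3⟩
      · intro e he
        rw [SimpleGraph.Walk.edges_copy] at he
        simp only [SimpleGraph.Walk.edges_cons, List.mem_cons]
        exact Or.inr (hp3 e he)

/-- Every edge of a walk joins consecutive `getVert`s. -/
lemma edges_index {a b : V} (w : G.Walk a b) :
    ∀ e ∈ w.edges, ∃ k, k < w.length ∧ e = s(w.getVert k, w.getVert (k + 1)) := by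
  induction w with
  | nil => simp
  | cons h w ih =>
    intro e he
    simp only [SimpleGraph.Walk.edges_cons, List.mem_cons] at he
    rcases he with rfl | he
    · exact ⟨0, Nat.succ_pos _, by simp [SimpleGraph.Walk.getVert_cons_succ]⟩
    · obtain ⟨k, hk, hke⟩ := ih e he
      exact ⟨k + 1, by simpa using Nat.succ_lt_succ hk,
        by simpa [SimpleGraph.Walk.getVert_cons_succ] using hke⟩

lemma support_eq_map {a b : V} (w : G.Walk a b) :
    w.support = (List.range (w.length + 1)).map w.getVert := by
  induction w with
  | nil => simp [List.range_succ]
  | cons h w ih =>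
    rw [SimpleGraph.Walk.support_cons, ih, SimpleGraph.Walk.length_cons,
      List.range_succ_eq_map (n := w.length + 1), List.map_cons, List.map_map]
    refine congrArg₂ List.cons (SimpleGraph.Walk.getVert_zero _).symm ?_
    apply List.map_congr_left
    intro t _
    simp [Function.comp, SimpleGraph.Walk.getVert_cons_succ]

/-- Walks with edges inside a set lift to the `fromEdgeSet` graph. -/
lemma exists_fromEdgeSet_walk {a b : V} (w : G.Walk a b) (F : Set (Sym2 V))
    (hF : ∀ e ∈ w.edges, e ∈ F) :
    ∃ w' : (fromEdgeSet F).Walk a b, w'.length = w.length := by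
  induction w with
  | nil => exact ⟨SimpleGraph.Walk.nil, rfl⟩
  | cons h w ih =>
    obtain ⟨w', hw'⟩ := ih (fun e he => hF e (by simp [SimpleGraph.Walk.edges_cons, he]))
    have hadj : (fromEdgeSet F).Adj _ _ :=
      (SimpleGraph.fromEdgeSet_adj _).2 ⟨hF _ (by simp [SimpleGraph.Walk.edges_cons]), h.ne⟩
    exact ⟨SimpleGraph.Walk.cons hadj w', by simp [hw']⟩

lemma dist_triangle' {G' : SimpleGraph V} {a b c : V} (h1 : G'.Reachable a b)
    (h2 : G'.Reachable b c) : G'.dist a c ≤ G'.dist a b + G'.dist b c := by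
  obtain ⟨p, hp⟩ := h1.exists_walk_length_eq_dist
  obtain ⟨q, hq⟩ := h2.exists_walk_length_eq_dist
  calc G'.dist a c ≤ (p.append q).length := SimpleGraph.dist_le _
    _ = G'.dist a b + G'.dist b c := by rw [SimpleGraph.Walk.length_append, hp, hq]



/-- Circle distance on `ZMod L`. -/
def cd (L : ℕ) (a b : ZMod L) : ℕ := min (b - a).val (a - b).val

variable {L : ℕ}

lemma val_sub_one [NeZero L] (u : ZMod L) (hu : u ≠ 0) : (u - 1).val = u.val - 1 := by
  have h1 : 1 ≤ u.val := Nat.one_le_iff_ne_zero.2 (fun h => hu ((ZMod.val_eq_zero u).1 h))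
  have hlt : u.val - 1 < L := by
    have := ZMod.val_lt u
    omega
  have : ((u.val - 1 : ℕ) : ZMod L) = u - 1 := by
    have hcast : ((u.val : ℕ) : ZMod L) = u := ZMod.natCast_zmod_val u
    push_cast [Nat.cast_sub h1]
    rw [hcast]
  rw [← this, ZMod.val_cast_of_lt hlt]

lemma cd_key1 (hL : 2 ≤ L) (a b : ZMod L) : cd L a b ≤ cd L (a + 1) b + 1 := by
  haveI : NeZero L := ⟨by omega⟩
  haveI : Fact (1 < L) := ⟨by omega⟩
  set u := b - a with hu
  have e1 : b - (a + 1) = u - 1 := by ring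
  have e2 : (a + 1) - b = 1 - u := by ring
  unfold cd
  rw [← hu, e1, e2]
  by_cases h1 : u = 1
  · have : u.val = 1 := by rw [h1, ZMod.val_one]
    omega
  · have k1 : u.val ≤ (u - 1).val + 1 := by
      have : u = (u - 1) + 1 := by ring
      calc u.val = ((u - 1) + 1).val := by rw [← this]
        _ ≤ (u - 1).val + (1 : ZMod L).val := ZMod.val_add_le _ _
        _ = (u - 1).val + 1 := by rw [ZMod.val_one]
    have k2 : (a - b).val ≤ (1 - u).val + 1 := by
      have hne : 1 - u ≠ 0 := fun h => h1 (by
        have : u = 1 := by linear_combination -h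
        exact this)
      have : a - b = (1 - u) - 1 := by ring
      rw [this, val_sub_one _ hne]
      omega
    omega

lemma cd_key2 (hL : 2 ≤ L) (a b : ZMod L) : cd L (a + 1) b ≤ cd L a b + 1 := by
  haveI : NeZero L := ⟨by omega⟩
  haveI : Fact (1 < L) := ⟨by omega⟩
  set u := b - a with hu
  have e1 : b - (a + 1) = u - 1 := by ring
  have e2 : (a + 1) - b = 1 - u := by ring
  unfold cd
  rw [← hu, e1, e2]
  by_cases h0 : u = 0
  · have : (1 - u).val = 1 := by rw [h0, sub_zero, ZMod.val_one]
    omega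
  · have k1 : (u - 1).val ≤ u.val + 1 := by
      rw [val_sub_one _ h0]; omega
    have k2 : (1 - u).val ≤ (a - b).val + 1 := by
      have : 1 - u = (a - b) + 1 := by ring
      calc (1 - u).val = ((a - b) + 1).val := by rw [this]
        _ ≤ (a - b).val + (1 : ZMod L).val := ZMod.val_add_le _ _
        _ = (a - b).val + 1 := by rw [ZMod.val_one]
    omega

lemma cd_cast (hL : 2 ≤ L) {i j : ℕ} (hij : i ≤ j) (hj : j < L) :
    cd L (i : ZMod L) (j : ZMod L) = min (j - i) (L - (j - i)) := by
  haveI : NeZero L := ⟨by omega⟩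
  have h1 : ((j : ZMod L) - (i : ZMod L)) = ((j - i : ℕ) : ZMod L) := by
    push_cast [Nat.cast_sub hij]; ring
  have hlt : j - i < L := by omega
  rcases Nat.eq_or_lt_of_le hij with rfl | hlt2
  · simp [cd]
  · have h2 : ((i : ZMod L) - (j : ZMod L)) = -(((j - i : ℕ) : ZMod L)) := by
      rw [← h1]; ring
    have hne : (((j - i : ℕ) : ZMod L)) ≠ 0 := by
      intro h
      have := ZMod.val_cast_of_lt hlt
      rw [h, ZMod.val_zero] at this
      omega
    unfold cd
    rw [h1, h2, ZMod.neg_val, if_neg hne, ZMod.val_cast_of_lt hlt]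

open SimpleGraph
variable {V : Type*} {G : SimpleGraph V}

lemma ball_finite (hconn : G.Connected) (hfin : ∀ v : V, (G.neighborSet v).Finite) (x : V) :
    ∀ n : ℕ, {z | G.dist x z ≤ n}.Finite := by
  intro n
  induction n with
  | zero =>
    apply Set.Finite.subset (Set.finite_singleton x)
    intro z hz
    simp only [Set.mem_setOf_eq, Nat.le_zero] at hz
    have := (hconn.dist_eq_zero_iff).1 hz
    simp [this.symm]
  | succ n ih =>
    apply Set.Finite.subset (Set.Finite.union ih
      (Set.Finite.biUnion ih (fun y _ => hfin y)))
    intro z hz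
    simp only [Set.mem_setOf_eq] at hz
    by_cases h : G.dist x z ≤ n
    · exact Or.inl h
    · right
      have hz' : G.dist x z = n + 1 := by omega
      have hne : G.dist x z ≠ 0 := by omega
      obtain ⟨w, hw⟩ := SimpleGraph.exists_walk_of_dist_ne_zero hne
      have hwr : w.reverse.length = n + 1 := by
        rw [SimpleGraph.Walk.length_reverse, hw, hz']
      cases hrev : w.reverse with
      | nil => rw [hrev] at hwr; simp at hwr
      | cons hadj t =>
        rename_i y
        rw [hrev] at hwr
        simp only [SimpleGraph.Walk.length_cons] at hwr
        refine Set.mem_biUnion (x := y) ?_ hadj.symm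
        show G.dist x y ≤ n
        calc G.dist x y ≤ t.reverse.length := SimpleGraph.dist_le _
          _ = n := by rw [SimpleGraph.Walk.length_reverse]; omega

lemma exists_minimal_rsep (r : ℕ) (a b : V) :
    ∀ n (S : Set V), S.Finite → S.ncard ≤ n → G.RSeparates S r a b →
      ∃ T, T ⊆ S ∧ G.MinimalRSeparator T r a b := by
  intro n
  induction n with
  | zero =>
    intro S hfin hcard hsep
    have : S = ∅ := by
      rw [← Set.ncard_eq_zero hfin]; omega
    subst this
    exact ⟨∅, le_rfl, hsep, fun S' hS' _ => absurd (hS'.trans_le (Set.empty_subset _)) (lt_irrefl _)⟩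
  | succ n ih =>
    intro S hfin hcard hsep
    by_cases h : ∃ S' ⊂ S, G.RSeparates S' r a b
    · obtain ⟨S', hS', hsep'⟩ := h
      have hfin' : S'.Finite := hfin.subset hS'.le
      have : S'.ncard < S.ncard := Set.ncard_lt_ncard hS' hfin
      obtain ⟨T, hT, hmin⟩ := ih S' hfin' (by omega) hsep'
      exact ⟨T, hT.trans hS'.le, hmin⟩
    · push_neg at h
      exact ⟨S, le_rfl, hsep, fun S' hS' => h S' hS'⟩

open SimpleGraph
variable {V : Type*} {G : SimpleGraph V}

lemma strict_shortcut_length_pos {v p q : V} {c : G.Walk v v} {σ : G.Walk p q}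
    (h : G.IsStrictShortcut c σ) : 1 ≤ σ.length := by
  by_contra hlen
  have h0 : σ.length = 0 := by omega
  have : p = q := by
    cases σ with
    | nil => rfl
    | cons h t => simp at h0
  subst this
  have := h.1.2.2.2
  rw [h0] at this
  have hz : G.walkDist c p p = 0 := SimpleGraph.dist_self
  omega

lemma strict_shortcut_reverse {v p q : V} {c : G.Walk v v} {σ : G.Walk p q}
    (h : G.IsStrictShortcut c σ) : G.IsStrictShortcut c σ.reverse := by
  obtain ⟨⟨hpath, hp, hq, hlt⟩, hset⟩ := h
  refine ⟨⟨hpath.reverse, hq, hp, ?_⟩, ?_⟩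
  · rw [SimpleGraph.Walk.length_reverse]
    calc σ.length < G.walkDist c p q := hlt
      _ = G.walkDist c q p := SimpleGraph.dist_comm
  · have : {x | x ∈ σ.reverse.support} = {x | x ∈ σ.support} := by
      ext z; simp [SimpleGraph.Walk.support_reverse]
    rw [this, hset, Set.pair_comm]

/-- Surgery: from a shortcut extract a strict shortcut, controlling the distance of
the new endpoint to the old endpoint `q`. -/
lemma surgery {v : V} (c : G.Walk v v)
    (hreach : ∀ z ∈ c.support, ∀ z' ∈ c.support,
      (fromEdgeSet {e | e ∈ c.edges}).Reachable z z') :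
    ∀ (n : ℕ) {p q : V} (σ : G.Walk p q), σ.length ≤ n → σ.IsPath →
      p ∈ c.support → q ∈ c.support → σ.length < G.walkDist c p q →
      ∃ (p' q' : V) (σ' : G.Walk p' q'), G.IsStrictShortcut c σ' ∧
        σ'.length ≤ σ.length ∧ G.walkDist c q q' + σ'.length ≤ σ.length := by
  intro n
  induction n using Nat.strong_induction_on with
  | _ n ih =>
  intro p q σ hn hpath hp hq hlt
  classical
  by_cases hint : ∃ y, y ∈ σ.support ∧ y ∈ c.support ∧ y ≠ p ∧ y ≠ q
  · obtain ⟨y, hyσ, hyc, hyp, hyq⟩ := hint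
    set σ₁ := σ.takeUntil y hyσ with hσ₁
    set σ₂ := σ.dropUntil y hyσ with hσ₂
    have hspec : σ₁.append σ₂ = σ := σ.take_spec hyσ
    have hlensum : σ₁.length + σ₂.length = σ.length := by
      rw [← hspec, SimpleGraph.Walk.length_append]
    have hpath1 : σ₁.IsPath := hpath.takeUntil hyσ
    have hpath2 : σ₂.IsPath := hpath.dropUntil hyσ
    have ha1 : 1 ≤ σ₁.length := by
      rcases Nat.eq_zero_or_pos σ₁.length with h0 | h; swap; · omega
      exact absurd (SimpleGraph.Walk.eq_of_length_eq_zero h0).symm hyp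
    have ha2 : 1 ≤ σ₂.length := by
      rcases Nat.eq_zero_or_pos σ₂.length with h0 | h; swap; · omega
      exact absurd (SimpleGraph.Walk.eq_of_length_eq_zero h0) hyq
    have htri : G.walkDist c p q ≤ G.walkDist c p y + G.walkDist c y q :=
      dist_triangle' (hreach p hp y hyc) (hreach y hyc q hq)
    by_cases hcase : σ₂.length < G.walkDist c y q
    · obtain ⟨p', q', σ', hstrict, hlen', hbound⟩ :=
        ih (n - 1) (by omega) σ₂ (by omega) hpath2 hyc hq hcase
      exact ⟨p', q', σ', hstrict, by omega, by omega⟩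
    · push_neg at hcase
      have hcase1 : σ₁.length < G.walkDist c p y := by omega
      obtain ⟨p', q', σ', hstrict, hlen', hbound⟩ :=
        ih (n - 1) (by omega) σ₁ (by omega) hpath1 hp hyc hcase1
      have hq'c : q' ∈ c.support := hstrict.1.2.2.1
      have htri2 : G.walkDist c q q' ≤ G.walkDist c q y + G.walkDist c y q' :=
        dist_triangle' (hreach q hq y hyc) (hreach y hyc q' hq'c)
      have hqy : G.walkDist c q y = G.walkDist c y q := SimpleGraph.dist_comm
      exact ⟨p', q', σ', hstrict, by omega, by omega⟩
  · push_neg at hint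
    have hpq : p ≠ q := by
      intro h
      subst h
      have : G.walkDist c p p = 0 := SimpleGraph.dist_self
      omega
    refine ⟨p, q, σ, ⟨⟨hpath, hp, hq, hlt⟩, ?_⟩, le_rfl, ?_⟩
    · ext z
      simp only [Set.mem_inter_iff, Set.mem_setOf_eq, Set.mem_insert_iff, Set.mem_singleton_iff]
      constructor
      · rintro ⟨h1, h2⟩
        by_contra hcon
        push_neg at hcon
        exact hcon.2 (hint z h1 h2 hcon.1)
      · rintro (rfl | rfl)
        · exact ⟨σ.start_mem_support, hp⟩
        · exact ⟨σ.end_mem_support, hq⟩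
    · have : G.walkDist c q q = 0 := SimpleGraph.dist_self
      omega

end RSepAux

/-- If `G` is uniform, `r ≥ 2`, and every minimal vertex `r`-separator
has diameter at most `m ≤ r`, then `G` is `(r + 1/2)`-densely `(2r+2, r)`-chordal. -/
theorem r_separators_small_implies_densely_chordal {V : Type*} (G : SimpleGraph V)
    (hconn : G.Connected) (μ : ℕ) (hμ : G.UniformGraph μ) (r m : ℕ)
    (hr : 2 ≤ r) (hm : m ≤ r)
    (hsep : ∀ (S : Set V) (a b : V), G.MinimalRSeparator S r a b →
      ∀ x ∈ S, ∀ y ∈ S, G.dist x y ≤ m) :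
    G.DenselyChordal ((r : ℝ) + 1/2) (2 * r + 2) r := by
  classical
  intro v c₀ hc₀ _ hlen₀ x hx
  set c : G.Walk x x := c₀.rotate x hx with hcdef
  have hc : c.IsCycle := hc₀.rotate hx
  have hedges : {e | e ∈ c.edges} = {e | e ∈ c₀.edges} :=
    Set.ext fun e => (c₀.rotate_edges x hx).mem_iff
  have hwd : ∀ p q, G.walkDist c p q = G.walkDist c₀ p q := by
    intro p q
    unfold SimpleGraph.walkDist
    rw [hedges]
  have hlenc : c.length = c₀.length := by
    have h1 := congrArg SimpleGraph.Walk.length (c₀.take_spec hx)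
    rw [SimpleGraph.Walk.length_append] at h1
    show ((c₀.dropUntil x hx).append (c₀.takeUntil x hx)).length = c₀.length
    rw [SimpleGraph.Walk.length_append]
    omega
  have mem_tail : ∀ {u : V} (w : G.Walk u u), ¬w.Nil → ∀ z, (z ∈ w.support ↔ z ∈ w.support.tail) := by
    intro u w hw z
    constructor
    · intro hz
      rw [SimpleGraph.Walk.support_eq_cons w] at hz
      rcases List.mem_cons.1 hz with rfl | h
      · cases w with
        | nil => exact absurd SimpleGraph.Walk.nil_nil hw
        | cons h t => simp only [SimpleGraph.Walk.support_cons, List.tail_cons]; exact t.end_mem_support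
      · exact h
    · intro hz
      rw [SimpleGraph.Walk.support_eq_cons w]
      exact List.mem_cons_of_mem _ hz
  have hmemsupp : ∀ z, z ∈ c.support ↔ z ∈ c₀.support := by
    intro z
    have h1 : c.support.tail ~r c₀.support.tail := c₀.support_rotate x hx
    exact (mem_tail c hc.not_nil z).trans ((h1.mem_iff).trans (mem_tail c₀ hc₀.not_nil z).symm)
  have hxc : x ∈ c.support := c.start_mem_support
  suffices hsuf : ∃ (p q : V) (σ : G.Walk p q), G.IsStrictShortcut c σ ∧ σ.length ≤ r ∧
      (G.walkDist c x p : ℝ) < (r : ℝ) + 1/2 by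
    obtain ⟨p, q, σ, ⟨⟨h1, h2, h3, h4⟩, h5⟩, h6, h7⟩ := hsuf
    refine ⟨p, q, σ, ⟨⟨h1, (hmemsupp p).1 h2, (hmemsupp q).1 h3, by rwa [← hwd]⟩, ?_⟩, h6,
      by rwa [← hwd x p]⟩
    have hseteq : {z : V | z ∈ c₀.support} = {z : V | z ∈ c.support} :=
      Set.ext fun z => (hmemsupp z).symm
    rw [hseteq]
    exact h5
  set L := c.length with hLdef
  have hL : 2 * r + 2 ≤ L := by rw [hlenc]; exact hlen₀
  have hx0 : c.getVert 0 = x := c.getVert_zero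
  have hxL : c.getVert L = x := c.getVert_length
  set H : SimpleGraph V := SimpleGraph.fromEdgeSet {e | e ∈ c.edges} with hHdef
  have hWD : ∀ p q, G.walkDist c p q = H.dist p q := fun _ _ => rfl
  -- injectivity of getVert on [0, L)
  have htail : c.support.tail.Nodup := hc.support_nodup
  have htl : c.support.tail = (List.range L).map (fun k => c.getVert (k + 1)) := by
    rw [RSepAux.support_eq_map c, List.range_succ_eq_map]
    simp [List.map_map, Function.comp]
    rfl
  have key : ∀ i' ∈ List.range L, ∀ j' ∈ List.range L,
      c.getVert (i' + 1) = c.getVert (j' + 1) → i' = j' :=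
    List.inj_on_of_nodup_map (htl ▸ htail)
  have hinj : ∀ i j, i < L → j < L → c.getVert i = c.getVert j → i = j := by
    intro i j hi hj hij
    have hL3 : 3 ≤ L := hc.three_le_length
    rcases Nat.eq_zero_or_pos i with rfl | hi1
    · rcases Nat.eq_zero_or_pos j with rfl | hj1
      · rfl
      · exfalso
        have h1 : c.getVert ((j - 1) + 1) = c.getVert ((L - 1) + 1) := by
          have e1 : (j - 1) + 1 = j := by omega
          have e2 : (L - 1) + 1 = L := by omega
          rw [e1, e2, hxL, ← hij]
          exact hx0
        have := key _ (List.mem_range.2 (by omega)) _ (List.mem_range.2 (by omega)) h1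
        omega
    · rcases Nat.eq_zero_or_pos j with rfl | hj1
      · exfalso
        have h1 : c.getVert ((i - 1) + 1) = c.getVert ((L - 1) + 1) := by
          have e1 : (i - 1) + 1 = i := by omega
          have e2 : (L - 1) + 1 = L := by omega
          rw [e1, e2, hxL, hij]
          exact hx0
        have := key _ (List.mem_range.2 (by omega)) _ (List.mem_range.2 (by omega)) h1
        omega
      · have h1 : c.getVert ((i - 1) + 1) = c.getVert ((j - 1) + 1) := by
          have e1 : (i - 1) + 1 = i := by omega
          have e2 : (j - 1) + 1 = j := by omega
          rw [e1, e2, hij]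
        have := key _ (List.mem_range.2 (by omega)) _ (List.mem_range.2 (by omega)) h1
        omega
  -- walks in H along the cycle
  have hHwalk : ∀ i j, i ≤ j → j ≤ L → ∃ W : H.Walk (c.getVert i) (c.getVert j),
      W.length = j - i := by
    intro i j hij hj
    obtain ⟨p, hp1, _, hp3⟩ := RSepAux.exists_seg c i j hij hj
    obtain ⟨W, hW⟩ := RSepAux.exists_fromEdgeSet_walk p _ hp3
    exact ⟨W, by rw [hW, hp1]⟩
  have hreachH : ∀ z ∈ c.support, ∀ z' ∈ c.support, H.Reachable z z' := by
    intro z hz z' hz'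
    obtain ⟨i, hi, hiL⟩ := SimpleGraph.Walk.mem_support_iff_exists_getVert.1 hz
    obtain ⟨j, hj, hjL⟩ := SimpleGraph.Walk.mem_support_iff_exists_getVert.1 hz'
    obtain ⟨W1, _⟩ := hHwalk i L hiL le_rfl
    obtain ⟨W2, _⟩ := hHwalk j L hjL le_rfl
    have r1 : H.Reachable (c.getVert i) (c.getVert L) := ⟨W1⟩
    have r2 : H.Reachable (c.getVert j) (c.getVert L) := ⟨W2⟩
    have := r1.trans r2.symm
    rwa [hi, hj] at this
  have hupper : ∀ i j, i ≤ j → j ≤ L → H.dist (c.getVert i) (c.getVert j) ≤ j - i := by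
    intro i j hij hj
    obtain ⟨W, hW⟩ := hHwalk i j hij hj
    calc H.dist _ _ ≤ W.length := SimpleGraph.dist_le _
      _ = j - i := hW
  -- lower bound machinery
  haveI : NeZero L := ⟨by omega⟩
  set g : V → ZMod L := fun z =>
    if h : ∃ i, i < L ∧ c.getVert i = z then ((h.choose : ℕ) : ZMod L) else 0 with hgdef
  have hg : ∀ i, i < L → g (c.getVert i) = (i : ZMod L) := by
    intro i hi
    have hex : ∃ k, k < L ∧ c.getVert k = c.getVert i := ⟨i, hi, rfl⟩
    have : g (c.getVert i) = ((hex.choose : ℕ) : ZMod L) := by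
      rw [hgdef]
      exact dif_pos hex
    rw [this]
    have hspec := hex.choose_spec
    have heq : hex.choose = i := hinj _ _ hspec.1 hi hspec.2
    rw [heq]
  have hstep : ∀ z z', H.Adj z z' → g z' = g z + 1 ∨ g z = g z' + 1 := by
    intro z z' hadj
    rw [hHdef, SimpleGraph.fromEdgeSet_adj] at hadj
    obtain ⟨he, hne⟩ := hadj
    obtain ⟨k, hk, hke⟩ := RSepAux.edges_index c _ he
    have hkL : k < L := hk
    have hg1 : g (c.getVert k) = (k : ZMod L) := hg k hkL
    have hg2 : g (c.getVert (k + 1)) = ((k + 1 : ℕ) : ZMod L) := by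
      rcases Nat.lt_or_ge (k + 1) L with h | h
      · exact hg _ h
      · have hkL1 : k + 1 = L := by omega
        rw [hkL1, hxL, ← hx0, hg 0 (by omega)]
        simp
    rcases Sym2.eq_iff.1 hke with ⟨h1, h2⟩ | ⟨h1, h2⟩
    · left
      rw [h1, h2, hg1, hg2]
      push_cast
      ring
    · right
      rw [h1, h2, hg1, hg2]
      push_cast
      ring
  have hcdwalk : ∀ (z z' : V) (W : H.Walk z z'), RSepAux.cd L (g z) (g z') ≤ W.length := by
    intro z z' W
    induction W with
    | nil => simp [RSepAux.cd]
    | @cons u' y' w' hadj W ihW =>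
      rw [SimpleGraph.Walk.length_cons]
      rcases hstep _ _ hadj with h | h
      · have h1 : RSepAux.cd L (g u') (g w') ≤ RSepAux.cd L (g u' + 1) (g w') + 1 :=
          RSepAux.cd_key1 (by omega) _ _
        rw [← h] at h1
        omega
      · have h1 : RSepAux.cd L (g y' + 1) (g w') ≤ RSepAux.cd L (g y') (g w') + 1 :=
          RSepAux.cd_key2 (by omega) _ _
        rw [← h] at h1
        omega
  have hlower : ∀ i j, i ≤ j → j < L →
      min (j - i) (L - (j - i)) ≤ H.dist (c.getVert i) (c.getVert j) := by
    intro i j hij hj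
    obtain ⟨W0, _⟩ := hHwalk i j hij (by omega)
    have hreach : H.Reachable (c.getVert i) (c.getVert j) := ⟨W0⟩
    obtain ⟨W, hW⟩ := hreach.exists_walk_length_eq_dist
    calc min (j - i) (L - (j - i)) = RSepAux.cd L (i : ZMod L) (j : ZMod L) :=
          (RSepAux.cd_cast (by omega) hij hj).symm
      _ = RSepAux.cd L (g (c.getVert i)) (g (c.getVert j)) := by
          rw [hg i (by omega), hg j hj]
      _ ≤ W.length := hcdwalk _ _ W
      _ = _ := hW
  -- main case split
  by_cases hcase : ∃ s ∈ c.support, G.dist x s ≤ r ∧ G.dist x s < H.dist x s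
  · obtain ⟨s, hs, hsr, hslt⟩ := hcase
    have hne : G.dist x s ≠ 0 := by
      intro h0
      have heq : x = s := (hconn.dist_eq_zero_iff).1 h0
      rw [← heq] at hslt
      have : H.dist x x = 0 := SimpleGraph.dist_self
      omega
    obtain ⟨W, hW⟩ := SimpleGraph.exists_walk_of_dist_ne_zero hne
    have hWpath : W.IsPath := W.isPath_of_length_eq_dist hW
    have hlt' : W.reverse.length < G.walkDist c s x := by
      rw [SimpleGraph.Walk.length_reverse, hW, hWD]
      calc G.dist x s < H.dist x s := hslt
        _ = H.dist s x := SimpleGraph.dist_comm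
    obtain ⟨p', q', σ', hstrict, hlen', hbound⟩ :=
      RSepAux.surgery c hreachH W.reverse.length W.reverse le_rfl hWpath.reverse hs hxc hlt'
    have h1 : 1 ≤ σ'.length := RSepAux.strict_shortcut_length_pos hstrict
    have h3 : W.reverse.length ≤ r := by
      rw [SimpleGraph.Walk.length_reverse, hW]
      exact hsr
    have hfin : G.walkDist c x q' ≤ r := by omega
    refine ⟨q', p', σ'.reverse, RSepAux.strict_shortcut_reverse hstrict, ?_, ?_⟩
    · rw [SimpleGraph.Walk.length_reverse]
      omega
    · have : (G.walkDist c x q' : ℝ) ≤ (r : ℝ) := by exact_mod_cast hfin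
      linarith
  · push_neg at hcase
    set b : V := c.getVert (r + 1) with hbdef
    have hbsup : b ∈ c.support :=
      SimpleGraph.Walk.mem_support_iff_exists_getVert.2 ⟨r + 1, rfl, by omega⟩
    have hbH : r + 1 ≤ H.dist x b := by
      have h3 := hlower 0 (r + 1) (by omega) (by omega)
      rw [hx0] at h3
      have hmin : min ((r + 1) - 0) (L - ((r + 1) - 0)) = r + 1 := by
        have : L - (r + 1) ≥ r + 1 := by omega
        omega
      rw [hmin] at h3
      exact h3
    have hbdist : r + 1 ≤ G.dist x b := by
      by_contra h
      push_neg at h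
      have := hcase b hbsup (by omega)
      omega
    set S₀ : Set V := {z | 1 ≤ G.dist x z ∧ G.dist x z ≤ r} with hS₀def
    have hS₀fin : S₀.Finite :=
      (RSepAux.ball_finite hconn (fun v => (hμ v).1) x r).subset (fun z hz => hz.2)
    have inv0 : ∀ (u w : V) (W : G.Walk u w), (∀ y ∈ W.support, y ∉ S₀) →
        G.dist x u = 0 → G.dist x w = 0 := by
      intro u w W
      induction W with
      | nil => exact fun _ h => h
      | @cons u' y' w' hadj W ihW =>
        intro hsup h0
        have hu : x = u' := (hconn.dist_eq_zero_iff).1 h0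
        have hadj' : G.Adj x y' := hu ▸ hadj
        have h1 : G.dist x y' ≤ 1 := by
          simpa using SimpleGraph.dist_le hadj'.toWalk
        have hy' : y' ∉ S₀ := hsup y' (by simp)
        have h2 : G.dist x y' = 0 := by
          rcases Nat.eq_zero_or_pos (G.dist x y') with h | h
          · exact h
          · exfalso
            apply hy'
            rw [hS₀def]
            exact ⟨h, by omega⟩
        exact ihW (fun z hz => hsup z (by simp [hz])) h2
    have invr : ∀ (u w : V) (W : G.Walk u w), (∀ y ∈ W.support, y ∉ S₀) →
        r + 1 ≤ G.dist x u → r + 1 ≤ G.dist x w := by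
      intro u w W
      induction W with
      | nil => exact fun _ h => h
      | @cons u' y' w' hadj W ihW =>
        intro hsup h0
        have htri : G.dist x u' ≤ G.dist x y' + G.dist y' u' :=
          hconn.dist_triangle
        have hd1 : G.dist y' u' = 1 := SimpleGraph.dist_eq_one_iff_adj.2 hadj.symm
        have h1 : r ≤ G.dist x y' := by omega
        have hy' : y' ∉ S₀ := hsup y' (by simp)
        have h2 : r + 1 ≤ G.dist x y' := by
          rw [hS₀def] at hy'
          simp only [Set.mem_setOf_eq, not_and, not_le] at hy'
          have := hy' (by omega)
          omega
        exact ihW (fun z hz => hsup z (by simp [hz])) h2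
    have hS₀sep : G.RSeparates S₀ r x b := by
      refine ⟨?_, ?_, ?_⟩
      · rw [hS₀def]
        simp [SimpleGraph.dist_self]
      · rw [hS₀def]
        simp only [Set.mem_setOf_eq, not_and, not_le]
        intro _
        omega
      · rintro v' w' ⟨Wv, hWv⟩ ⟨Ww, hWw⟩
        have h1 : G.dist x v' = 0 := inv0 _ _ Wv hWv (by simp [SimpleGraph.dist_self])
        have h2 : r + 1 ≤ G.dist x w' := invr _ _ Ww hWw hbdist
        have hv : x = v' := (hconn.dist_eq_zero_iff).1 h1
        rw [← hv]
        omega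
    obtain ⟨S, hSsub, hSmin⟩ :=
      RSepAux.exists_minimal_rsep r x b S₀.ncard S₀ hS₀fin le_rfl hS₀sep
    have hSr : ∀ z ∈ S, G.dist x z ≤ r := fun z hz => (hSsub hz).2
    have hxS : x ∉ S := hSmin.1.1
    have hbS : b ∉ S := hSmin.1.2.1
    have hdiam : ∀ y ∈ S, ∀ z ∈ S, G.dist y z ≤ m := hsep S x b hSmin
    have hwalkS : ∀ (W : G.Walk x b), ∃ y ∈ W.support, y ∈ S := by
      intro W
      by_contra h
      push_neg at h
      have h1 : G.ReachAvoiding S x b := ⟨W, h⟩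
      have h2 : G.ReachAvoiding S b b := ⟨SimpleGraph.Walk.nil, by simpa using hbS⟩
      have h3 := hSmin.1.2.2 b b h1 h2
      have : G.dist b b = 0 := SimpleGraph.dist_self
      omega
    -- arc A
    set J := (Finset.Icc 1 r).filter (fun t => c.getVert t ∈ S) with hJdef
    have hJmem : ∀ t, t ∈ J ↔ (1 ≤ t ∧ t ≤ r) ∧ c.getVert t ∈ S := by
      intro t
      rw [hJdef, Finset.mem_filter, Finset.mem_Icc]
    have hJne : J.Nonempty := by
      by_contra hJe
      rw [Finset.not_nonempty_iff_eq_empty] at hJe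
      obtain ⟨W, _, hW2, _⟩ := RSepAux.exists_seg c 0 (r + 1) (by omega) (by omega)
      obtain ⟨y, hy1, hy2⟩ := hwalkS (W.copy hx0 hbdef.symm)
      rw [SimpleGraph.Walk.support_copy] at hy1
      obtain ⟨t, _, ht2, ht3⟩ := hW2 y hy1
      subst ht3
      rcases Nat.eq_zero_or_pos t with rfl | ht
      · rw [hx0] at hy2
        exact hxS hy2
      · rcases Nat.lt_or_ge t (r + 1) with h | h
        · have : t ∈ J := (hJmem t).2 ⟨⟨by omega, by omega⟩, hy2⟩
          rw [hJe] at this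
          simp at this
        · have : t = r + 1 := by omega
          rw [this, ← hbdef] at hy2
          exact hbS hy2
    set j₁ := J.min' hJne with hj₁def
    set j₂ := J.max' hJne with hj₂def
    have hj₁m : j₁ ∈ J := J.min'_mem hJne
    have hj₂m : j₂ ∈ J := J.max'_mem hJne
    have hj₁b : 1 ≤ j₁ ∧ j₁ ≤ r := ((hJmem j₁).1 hj₁m).1
    have hj₂b : 1 ≤ j₂ ∧ j₂ ≤ r := ((hJmem j₂).1 hj₂m).1
    have hjJS : c.getVert j₂ ∈ S := ((hJmem j₂).1 hj₂m).2
    have hj₁₂ : j₁ ≤ j₂ := J.min'_le _ hj₂m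
    clear_value j₁ j₂
    have reach1 : G.ReachAvoiding S x (c.getVert (j₁ - 1)) := by
      obtain ⟨W, _, hW2, _⟩ := RSepAux.exists_seg c 0 (j₁ - 1) (by omega) (by omega)
      refine ⟨W.copy hx0 rfl, ?_⟩
      intro z hz
      rw [SimpleGraph.Walk.support_copy] at hz
      obtain ⟨t, _, ht2, ht3⟩ := hW2 z hz
      subst ht3
      intro hzS
      rcases Nat.eq_zero_or_pos t with rfl | ht
      · rw [hx0] at hzS
        exact hxS hzS
      · have htJ : t ∈ J := (hJmem t).2 ⟨⟨by omega, by omega⟩, hzS⟩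
        have h7 := J.min'_le t htJ
        rw [← hj₁def] at h7
        omega
    have reach2 : G.ReachAvoiding S b (c.getVert (j₂ + 1)) := by
      obtain ⟨W, _, hW2, _⟩ := RSepAux.exists_seg c (j₂ + 1) (r + 1) (by omega) (by omega)
      refine ⟨W.reverse.copy hbdef.symm rfl, ?_⟩
      intro z hz
      rw [SimpleGraph.Walk.support_copy, SimpleGraph.Walk.support_reverse, List.mem_reverse] at hz
      obtain ⟨t, ht1, ht2, ht3⟩ := hW2 z hz
      subst ht3
      intro hzS
      rcases Nat.lt_or_ge t (r + 1) with h | h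
      · have htJ : t ∈ J := (hJmem t).2 ⟨⟨by omega, by omega⟩, hzS⟩
        have h7 := J.le_max' t htJ
        rw [← hj₂def] at h7
        omega
      · have : t = r + 1 := by omega
        rw [this, ← hbdef] at hzS
        exact hbS hzS
    have hsep1 := hSmin.1.2.2 _ _ reach1 reach2
    have hdle : G.dist (c.getVert (j₁ - 1)) (c.getVert (j₂ + 1)) ≤ (j₂ + 1) - (j₁ - 1) := by
      obtain ⟨W, hW1, _, _⟩ := RSepAux.exists_seg c (j₁ - 1) (j₂ + 1) (by omega) (by omega)
      calc G.dist _ _ ≤ W.length := SimpleGraph.dist_le _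
        _ = _ := hW1
    have hj2r : j₂ = r := by
      obtain ⟨ha1, ha2⟩ := hj₁b
      obtain ⟨hb1, hb2⟩ := hj₂b
      omega
    have hcr : c.getVert r ∈ S := by
      rw [← hj2r]
      exact hjJS
    -- arc B
    set K := (Finset.Icc (r + 2) (L - 1)).filter (fun t => c.getVert t ∈ S) with hKdef
    have hKmem : ∀ t, t ∈ K ↔ (r + 2 ≤ t ∧ t ≤ L - 1) ∧ c.getVert t ∈ S := by
      intro t
      rw [hKdef, Finset.mem_filter, Finset.mem_Icc]
    have hKhigh : ∀ t ∈ K, L - r ≤ t := by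
      intro t ht
      obtain ⟨⟨ht1, ht2⟩, htS⟩ := (hKmem t).1 ht
      have h1 : G.dist x (c.getVert t) ≤ r := hSr _ htS
      have hts : c.getVert t ∈ c.support :=
        SimpleGraph.Walk.mem_support_iff_exists_getVert.2 ⟨t, rfl, by omega⟩
      have h2 : H.dist x (c.getVert t) ≤ r := le_trans (hcase _ hts h1) h1
      have h3 := hlower 0 t (by omega) (by omega)
      rw [hx0] at h3
      have h4 : t ≤ r ∨ L - t ≤ r := by
        rcases Nat.le_total (t - 0) (L - (t - 0)) with h | h
        · rw [min_eq_left h] at h3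
          left
          omega
        · rw [min_eq_right h] at h3
          right
          omega
      omega
    have hKne : K.Nonempty := by
      by_contra hKe
      rw [Finset.not_nonempty_iff_eq_empty] at hKe
      obtain ⟨W, _, hW2, _⟩ := RSepAux.exists_seg c (r + 1) L (by omega) le_rfl
      obtain ⟨y, hy1, hy2⟩ := hwalkS (W.reverse.copy hxL hbdef.symm)
      rw [SimpleGraph.Walk.support_copy, SimpleGraph.Walk.support_reverse, List.mem_reverse] at hy1
      obtain ⟨t, ht1, ht2, ht3⟩ := hW2 y hy1
      subst ht3
      rcases Nat.eq_or_lt_of_le ht1 with h | h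
      · rw [← h, ← hbdef] at hy2
        exact hbS hy2
      · rcases Nat.eq_or_lt_of_le ht2 with h2 | h2
        · rw [h2, hxL] at hy2
          exact hxS hy2
        · have : t ∈ K := (hKmem t).2 ⟨⟨by omega, by omega⟩, hy2⟩
          rw [hKe] at this
          simp at this
    set k₁ := K.min' hKne with hk₁def
    set k₂ := K.max' hKne with hk₂def
    have hk₁m : k₁ ∈ K := K.min'_mem hKne
    have hk₂m : k₂ ∈ K := K.max'_mem hKne
    have hk₁b : r + 2 ≤ k₁ ∧ k₁ ≤ L - 1 := ((hKmem k₁).1 hk₁m).1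
    have hk₂b : r + 2 ≤ k₂ ∧ k₂ ≤ L - 1 := ((hKmem k₂).1 hk₂m).1
    have hk₁high : L - r ≤ k₁ := hKhigh _ hk₁m
    have hkKS : c.getVert k₂ ∈ S := ((hKmem k₂).1 hk₂m).2
    have hk₁₂ : k₁ ≤ k₂ := K.min'_le _ hk₂m
    clear_value k₁ k₂
    have reach3 : G.ReachAvoiding S b (c.getVert (k₁ - 1)) := by
      obtain ⟨W, _, hW2, _⟩ := RSepAux.exists_seg c (r + 1) (k₁ - 1) (by omega) (by omega)
      refine ⟨W.copy hbdef.symm rfl, ?_⟩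
      intro z hz
      rw [SimpleGraph.Walk.support_copy] at hz
      obtain ⟨t, ht1, ht2, ht3⟩ := hW2 z hz
      subst ht3
      intro hzS
      rcases Nat.eq_or_lt_of_le ht1 with h | h
      · rw [← h, ← hbdef] at hzS
        exact hbS hzS
      · have htK : t ∈ K := (hKmem t).2 ⟨⟨by omega, by omega⟩, hzS⟩
        have h7 := K.min'_le t htK
        rw [← hk₁def] at h7
        omega
    have reach4 : G.ReachAvoiding S x (c.getVert (k₂ + 1)) := by
      obtain ⟨W, _, hW2, _⟩ := RSepAux.exists_seg c (k₂ + 1) L (by omega) (by omega)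
      refine ⟨W.reverse.copy hxL rfl, ?_⟩
      intro z hz
      rw [SimpleGraph.Walk.support_copy, SimpleGraph.Walk.support_reverse, List.mem_reverse] at hz
      obtain ⟨t, ht1, ht2, ht3⟩ := hW2 z hz
      subst ht3
      intro hzS
      rcases Nat.eq_or_lt_of_le ht2 with h | h
      · rw [h, hxL] at hzS
        exact hxS hzS
      · have htK : t ∈ K := (hKmem t).2 ⟨⟨by omega, by omega⟩, hzS⟩
        have h7 := K.le_max' t htK
        rw [← hk₂def] at h7
        omega
    have hsep2 := hSmin.1.2.2 _ _ reach4 reach3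
    have hdle2 : G.dist (c.getVert (k₂ + 1)) (c.getVert (k₁ - 1)) ≤ (k₂ + 1) - (k₁ - 1) := by
      obtain ⟨W, hW1, _, _⟩ := RSepAux.exists_seg c (k₁ - 1) (k₂ + 1) (by omega) (by omega)
      calc G.dist (c.getVert (k₂ + 1)) (c.getVert (k₁ - 1))
          = G.dist (c.getVert (k₁ - 1)) (c.getVert (k₂ + 1)) := SimpleGraph.dist_comm
        _ ≤ W.length := SimpleGraph.dist_le _
        _ = _ := hW1
    have hk2 : k₂ = L - 1 := by
      obtain ⟨ha1, ha2⟩ := hk₁b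
      obtain ⟨hb1, hb2⟩ := hk₂b
      omega
    have hcl : c.getVert (L - 1) ∈ S := by
      rw [← hk2]
      exact hkKS
    -- final shortcut pair
    have hdistpq : G.dist (c.getVert r) (c.getVert (L - 1)) ≤ m := hdiam _ hcr _ hcl
    have hlow : r + 1 ≤ H.dist (c.getVert r) (c.getVert (L - 1)) := by
      have h3 := hlower r (L - 1) (by omega) (by omega)
      have hmin : min ((L - 1) - r) (L - ((L - 1) - r)) = r + 1 := by omega
      rw [hmin] at h3
      exact h3
    have hne2 : G.dist (c.getVert r) (c.getVert (L - 1)) ≠ 0 := by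
      intro h0
      have heq : c.getVert r = c.getVert (L - 1) := hconn.dist_eq_zero_iff.1 h0
      rw [heq] at hlow
      have : H.dist (c.getVert (L - 1)) (c.getVert (L - 1)) = 0 := SimpleGraph.dist_self
      omega
    obtain ⟨W, hW⟩ := SimpleGraph.exists_walk_of_dist_ne_zero hne2
    have hWpath : W.IsPath := W.isPath_of_length_eq_dist hW
    have hrs : c.getVert r ∈ c.support :=
      SimpleGraph.Walk.mem_support_iff_exists_getVert.2 ⟨r, rfl, by omega⟩
    have hls : c.getVert (L - 1) ∈ c.support :=
      SimpleGraph.Walk.mem_support_iff_exists_getVert.2 ⟨L - 1, rfl, by omega⟩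
    have hltW : W.length < G.walkDist c (c.getVert r) (c.getVert (L - 1)) := by
      rw [hW, hWD]
      omega
    obtain ⟨p', q', σ', hstrict, hlen', hbound⟩ :=
      RSepAux.surgery c hreachH W.length W le_rfl hWpath hrs hls hltW
    have h1 : 1 ≤ σ'.length := RSepAux.strict_shortcut_length_pos hstrict
    have hxq : H.dist x (c.getVert (L - 1)) ≤ 1 := by
      have h2 := hupper (L - 1) L (by omega) le_rfl
      rw [hxL] at h2
      calc H.dist x (c.getVert (L - 1)) = H.dist (c.getVert (L - 1)) x := SimpleGraph.dist_comm
        _ ≤ L - (L - 1) := h2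
        _ ≤ 1 := by omega
    have hq's : q' ∈ c.support := hstrict.1.2.2.1
    have htri3 : H.dist x q' ≤ H.dist x (c.getVert (L - 1)) + H.dist (c.getVert (L - 1)) q' :=
      RSepAux.dist_triangle' (hreachH x hxc _ hls) (hreachH _ hls q' hq's)
    have hbound' : H.dist (c.getVert (L - 1)) q' + σ'.length ≤ W.length := hbound
    have h3 : W.length ≤ r := by
      rw [hW]
      omega
    have hfin : G.walkDist c x q' ≤ r := by
      rw [hWD]
      omega
    refine ⟨q', p', σ'.reverse, RSepAux.strict_shortcut_reverse hstrict, ?_, ?_⟩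
    · rw [SimpleGraph.Walk.length_reverse]
      omega
    · have : (G.walkDist c x q' : ℝ) ≤ (r : ℝ) := by exact_mod_cast hfin
      linarith
end

section
/- G satisfies the Bottleneck Property if and only if there is a constant Δ'' > 0 such that for every pair of vertices a,b with d(a,b) ≥ 2Δ''+2 and every geodesic [ab], there exists a vertex c ∈ [ab] that is an ab-N_{Δ''}-separator (i.e., a and b lie in different components of G minus the closed Δ''-neighborhood of c). -/
namespace SimpleGraph

variable {V : Type*} (G : SimpleGraph V)

/-- `S` is an `ab`-`N_r`-separator: `a` and `b` lie in different components of
`G` minus the closed `r`-neighborhood of `S`. -/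
def NrSeparates (S : Set V) (r : ℕ) (a b : V) : Prop :=
  (∀ s ∈ S, r < G.dist a s) ∧ (∀ s ∈ S, r < G.dist b s) ∧
    ∀ γ : G.Walk a b, ∃ w ∈ γ.support, ∃ s ∈ S, G.dist w s ≤ r

end SimpleGraph


namespace BPaux

open SimpleGraph

variable {V : Type*} {G : SimpleGraph V}

lemma exists_subwalk {u v : V} (p : G.Walk u v) :
    ∀ i j : ℕ, i ≤ j → j ≤ p.length →
    ∃ q : G.Walk (p.getVert i) (p.getVert j), q.length = j - i ∧
      ∀ t ≤ j - i, q.getVert t = p.getVert (i + t) := by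
  induction p with
  | nil =>
    intro i j hij hj
    simp only [Walk.length_nil, Nat.le_zero] at hj
    subst hj
    obtain rfl : i = 0 := Nat.le_zero.mp hij
    exact ⟨Walk.nil, rfl, fun t ht => by
      simp only [Nat.sub_zero, Nat.le_zero] at ht; subst ht; rfl⟩
  | @cons u w v h p ih =>
    intro i j hij hj
    match i, j with
    | 0, 0 => exact ⟨Walk.nil, rfl, fun t ht => by
        simp only [Nat.sub_zero, Nat.le_zero] at ht; subst ht; rfl⟩
    | 0, j+1 =>
      obtain ⟨q, hql, hqv⟩ := ih 0 j (Nat.zero_le _) (by simpa using hj)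
      refine ⟨Walk.cons h (q.copy (p.getVert_zero) rfl), ?_, ?_⟩
      · exact (by simp [hql] : (Walk.cons h (q.copy (p.getVert_zero) rfl)).length = j + 1)
      · rintro (_|t) ht
        · rfl
        · have := hqv t (by omega)
          simp only [Walk.getVert_cons_succ, Walk.getVert_copy, Nat.zero_add] at *
          exact (by simpa using this : (Walk.cons h (q.copy (p.getVert_zero) rfl)).getVert (t + 1) = p.getVert t)
    | i+1, j+1 =>
      obtain ⟨q, hql, hqv⟩ := ih i j (by omega) (by simpa using hj)
      refine ⟨q, by rw [show j + 1 - (i + 1) = j - i by omega]; exact hql, ?_⟩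
      intro t ht
      have := hqv t (by omega)
      rw [show i + 1 + t = (i + t) + 1 by omega]
      exact this

lemma dist_getVert_le (p : G.Walk u v) {i j : ℕ} (hij : i ≤ j) (hj : j ≤ p.length) :
    G.dist (p.getVert i) (p.getVert j) ≤ j - i := by
  obtain ⟨q, hql, -⟩ := exists_subwalk p i j hij hj
  exact hql ▸ SimpleGraph.dist_le q

lemma geodesic_dist_getVert (hconn : G.Connected) {u v : V} (p : G.Walk u v)
    (hp : p.length = G.dist u v) {i j : ℕ} (hij : i ≤ j) (hj : j ≤ p.length) :
    G.dist (p.getVert i) (p.getVert j) = j - i := by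
  have h1 : G.dist (p.getVert i) (p.getVert j) ≤ j - i := dist_getVert_le p hij hj
  have h2 : G.dist u (p.getVert i) ≤ i := by
    have := dist_getVert_le p (Nat.zero_le i) (le_trans hij hj)
    simpa [Walk.getVert_zero] using this
  have h3 : G.dist (p.getVert j) v ≤ p.length - j := by
    have := dist_getVert_le p hj (le_refl p.length)
    simpa [Walk.getVert_length] using this
  have t1 : G.dist u v ≤ G.dist u (p.getVert i) + G.dist (p.getVert i) v :=
    hconn.dist_triangle
  have t2 : G.dist (p.getVert i) v ≤
      G.dist (p.getVert i) (p.getVert j) + G.dist (p.getVert j) v := hconn.dist_triangle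
  omega

end BPaux

/-- `G` satisfies (BP) iff there is a constant `Δ'' > 0` such that for
every pair of vertices `a,b` with `d(a,b) ≥ 2Δ''+2` and every geodesic `[ab]`, some
vertex `c ∈ [ab]` is an `ab`-`N_{Δ''}`-separator. -/
theorem bp_iff_neighbor_separator {V : Type*} (G : SimpleGraph V)
    (hconn : G.Connected) :
    (∃ Δ : ℝ, 0 < Δ ∧ G.BP Δ) ↔
      (∃ Δ'' : ℕ, 0 < Δ'' ∧ ∀ a b : V, 2 * Δ'' + 2 ≤ G.dist a b →
        ∀ p : G.Walk a b, G.IsGeodesic p →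
          ∃ c ∈ p.support, G.NrSeparates {c} Δ'' a b) := by
  constructor
  · rintro ⟨Δ, hΔ, hBP⟩
    refine ⟨⌈Δ⌉₊, Nat.ceil_pos.mpr hΔ, ?_⟩
    intro a b hab p hp
    have hlen : p.length = G.dist a b := hp
    have hne : a ≠ b := by
      intro h
      subst h
      rw [SimpleGraph.dist_self] at hab
      omega
    set j := G.dist a b / 2 with hjdef
    have hjle : j ≤ p.length := by omega
    have hmem : p.getVert j ∈ p.support :=
      SimpleGraph.Walk.mem_support_iff_exists_getVert.mpr ⟨j, rfl, hjle⟩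
    have hdaz : G.dist a (p.getVert j) = j := by
      have := BPaux.geodesic_dist_getVert hconn p hlen (Nat.zero_le j) hjle
      simpa [SimpleGraph.Walk.getVert_zero] using this
    have hdzb : G.dist (p.getVert j) b = p.length - j := by
      have := BPaux.geodesic_dist_getVert hconn p hlen hjle le_rfl
      simpa [SimpleGraph.Walk.getVert_length] using this
    refine ⟨p.getVert j, hmem, ?_, ?_, ?_⟩
    · intro s hs
      rw [Set.mem_singleton_iff] at hs
      subst hs
      omega
    · intro s hs
      rw [Set.mem_singleton_iff] at hs
      subst hs
      rw [SimpleGraph.dist_comm]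
      omega
    · intro γ
      have hcond : ((G.dist a (p.getVert j) : ℤ) - (G.dist (p.getVert j) b : ℤ)).natAbs ≤ 1 := by
        rw [hdaz, hdzb]
        omega
      obtain ⟨w, hw, hwd⟩ := hBP a b hne p hp (p.getVert j) hmem hcond γ
      refine ⟨w, hw, p.getVert j, rfl, ?_⟩
      have : (G.dist w (p.getVert j) : ℝ) ≤ (⌈Δ⌉₊ : ℝ) := hwd.trans (Nat.le_ceil Δ)
      exact_mod_cast this
  · rintro ⟨Δ'', hΔ'', H⟩
    refine ⟨2 * (Δ'' : ℝ) + 2, by positivity, ?_⟩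
    intro a b hne p hp z hz hcond γ
    have hlen : p.length = G.dist a b := hp
    obtain ⟨jz, hjz, hjzle⟩ := SimpleGraph.Walk.mem_support_iff_exists_getVert.mp hz
    subst hjz
    have hdaz : G.dist a (p.getVert jz) = jz := by
      have := BPaux.geodesic_dist_getVert hconn p hlen (Nat.zero_le jz) hjzle
      simpa [SimpleGraph.Walk.getVert_zero] using this
    have hdzb : G.dist (p.getVert jz) b = p.length - jz := by
      have := BPaux.geodesic_dist_getVert hconn p hlen hjzle le_rfl
      simpa [SimpleGraph.Walk.getVert_length] using this
    rw [hdaz, hdzb] at hcond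
    by_cases hsmall : G.dist a b < 2 * Δ'' + 2
    · refine ⟨a, γ.start_mem_support, ?_⟩
      have hnat : G.dist a (p.getVert jz) ≤ 2 * Δ'' + 2 := by omega
      exact_mod_cast hnat
    · push_neg at hsmall
      set i1 := jz - (Δ'' + 1) with hi1
      set i2 := jz + (Δ'' + 1) with hi2
      have hjz1 : Δ'' + 1 ≤ jz := by omega
      have hi2le : i2 ≤ p.length := by omega
      have hd' : G.dist (p.getVert i1) (p.getVert i2) = i2 - i1 :=
        BPaux.geodesic_dist_getVert hconn p hlen (by omega) hi2le
      obtain ⟨q, hql, hqv⟩ := BPaux.exists_subwalk p i1 i2 (by omega) hi2le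
      have hq_geo : G.IsGeodesic q := by
        show q.length = _
        rw [hql, hd']
      obtain ⟨c, hc, hsep1, hsep2, hsep3⟩ :=
        H (p.getVert i1) (p.getVert i2) (by rw [hd']; omega) q hq_geo
      obtain ⟨k, hk, hkle⟩ := SimpleGraph.Walk.mem_support_iff_exists_getVert.mp hc
      rw [hql] at hkle
      have hck : c = p.getVert (i1 + k) := by
        rw [← hk, hqv k hkle]
      have hd1 : G.dist (p.getVert i1) c = k := by
        rw [hck, BPaux.geodesic_dist_getVert hconn p hlen (Nat.le_add_right i1 k) (by omega)]
        omega
      have hkΔ : Δ'' < k := by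
        have := hsep1 c rfl
        omega
      have hd2 : G.dist (p.getVert i2) c = i2 - (i1 + k) := by
        rw [hck, SimpleGraph.dist_comm,
          BPaux.geodesic_dist_getVert hconn p hlen (by omega) hi2le]
      have hkΔ2 : Δ'' < i2 - (i1 + k) := by
        have := hsep2 c rfl
        omega
      obtain ⟨q1, hq1l, hq1v⟩ := BPaux.exists_subwalk p 0 i1 (Nat.zero_le _) (by omega)
      obtain ⟨q2, hq2l, hq2v⟩ := BPaux.exists_subwalk p i2 p.length hi2le le_rfl
      obtain ⟨w, hwΓ, s, hs, hws⟩ :=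
        hsep3 (((q1.copy p.getVert_zero rfl).reverse).append
          (γ.append (q2.copy rfl p.getVert_length).reverse))
      rw [Set.mem_singleton_iff] at hs
      subst hs
      rw [SimpleGraph.Walk.mem_support_append_iff] at hwΓ
      rcases hwΓ with hwΓ | hwΓ
      · exfalso
        rw [SimpleGraph.Walk.support_reverse, List.mem_reverse,
          SimpleGraph.Walk.support_copy] at hwΓ
        obtain ⟨t, htv, htle⟩ := SimpleGraph.Walk.mem_support_iff_exists_getVert.mp hwΓ
        rw [hq1l] at htle
        have hw_eq : w = p.getVert t := by
          have := hq1v t htle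
          rw [Nat.zero_add] at this
          rw [← htv, this]
        have hwc : G.dist w s = (i1 + k) - t := by
          rw [hw_eq, hck, BPaux.geodesic_dist_getVert hconn p hlen (by omega) (by omega)]
        omega
      · rw [SimpleGraph.Walk.mem_support_append_iff] at hwΓ
        rcases hwΓ with hwΓ | hwΓ
        · -- w on γ : the good case
          refine ⟨w, hwΓ, ?_⟩
          have hdcz : G.dist s (p.getVert jz) ≤ Δ'' + 1 := by
            rcases le_total (i1 + k) jz with h | h
            · rw [hck, BPaux.geodesic_dist_getVert hconn p hlen h hjzle]
              omega
            · rw [hck, SimpleGraph.dist_comm,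
                BPaux.geodesic_dist_getVert hconn p hlen h (by omega)]
              omega
          have tri : G.dist w (p.getVert jz) ≤ G.dist w s + G.dist s (p.getVert jz) :=
            hconn.dist_triangle
          have hfin : G.dist w (p.getVert jz) ≤ 2 * Δ'' + 2 := by omega
          exact_mod_cast hfin
        · exfalso
          rw [SimpleGraph.Walk.support_reverse, List.mem_reverse,
            SimpleGraph.Walk.support_copy] at hwΓ
          obtain ⟨t, htv, htle⟩ := SimpleGraph.Walk.mem_support_iff_exists_getVert.mp hwΓ
          rw [hq2l] at htle
          have hw_eq : w = p.getVert (i2 + t) := by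
            rw [← htv, hq2v t htle]
          have hwc : G.dist w s = (i2 + t) - (i1 + k) := by
            rw [hw_eq, hck, SimpleGraph.dist_comm,
              BPaux.geodesic_dist_getVert hconn p hlen (by omega) (by omega)]
          omega
end

section
/- If G is (k,1)-chordal, then for every geodesic [ab] with d(a,b) ≥ k/2 + 2 and every pair of vertices a',b' ∈ [ab] with d({a',b'},{a,b}) ≥ 2 and d(a',b') ≥ k/2 − 2, the subgeodesic [a'b'] ⊆ [ab] is an ab-N₁-separator: a and b lie in different components of G minus the closed 1-neighborhood of [a'b']. -/
namespace SimpleGraph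
namespace Walk

variable {V : Type*} {G : SimpleGraph V}

/-- The subwalk of `p` from position `s` over `n` steps. -/
def seg {a b : V} (p : G.Walk a b) : (s n : ℕ) → s + n ≤ p.length →
    G.Walk (p.getVert s) (p.getVert (s + n))
  | s, 0, _ => Walk.nil.copy rfl (by rw [Nat.add_zero])
  | s, n+1, h =>
    Walk.cons (p.adj_getVert_succ (by omega))
      ((seg p (s+1) n (by omega)).copy rfl (by congr 1; omega))

@[simp] lemma seg_length {a b : V} (p : G.Walk a b) (s n : ℕ) (h : s + n ≤ p.length) :
    (seg p s n h).length = n := by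
  induction n generalizing s with
  | zero => simp [seg]
  | succ n ih => simp [seg, ih]

lemma mem_seg_support_iff {a b : V} (p : G.Walk a b) (s n : ℕ) (h : s + n ≤ p.length) (w : V) :
    w ∈ (seg p s n h).support ↔ ∃ r, s ≤ r ∧ r ≤ s + n ∧ p.getVert r = w := by
  induction n generalizing s with
  | zero =>
    simp only [seg, support_copy, support_nil, List.mem_singleton]
    constructor
    · rintro rfl; exact ⟨s, le_refl _, by omega, rfl⟩
    · rintro ⟨r, h1, h2, rfl⟩; congr 1; omega
  | succ n ih =>
    simp only [seg, support_cons, support_copy, List.mem_cons]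
    rw [ih]
    constructor
    · rintro (rfl | ⟨r, h1, h2, rfl⟩)
      · exact ⟨s, le_refl _, by omega, rfl⟩
      · exact ⟨r, by omega, by omega, rfl⟩
    · rintro ⟨r, h1, h2, rfl⟩
      rcases Nat.eq_or_lt_of_le h1 with rfl | hlt
      · left; rfl
      · right; exact ⟨r, by omega, by omega, rfl⟩

lemma seg_edge_mem {a b : V} (p : G.Walk a b) (s n : ℕ) (h : s + n ≤ p.length) (r : ℕ)
    (h1 : s ≤ r) (h2 : r < s + n) :
    s(p.getVert r, p.getVert (r+1)) ∈ (seg p s n h).edges := by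
  induction n generalizing s with
  | zero => omega
  | succ n ih =>
    simp only [seg, edges_cons, edges_copy, List.mem_cons]
    rcases Nat.eq_or_lt_of_le h1 with rfl | hlt
    · left; rfl
    · right; exact ih (s+1) (by omega) (by omega) (by omega)

lemma edge_mem_of_length_eq_one {u v : V} {W : G.Walk u v} (h : W.length = 1) :
    s(u, v) ∈ W.edges := by
  cases W with
  | nil => simp at h
  | cons h' W' =>
    cases W' with
    | nil => simp
    | cons h'' W'' => simp [Walk.length_cons] at h

lemma takeUntil_dropUntil_inter [DecidableEq V] {c d x : V} {S : G.Walk c d} (hS : S.IsPath)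
    (hx : x ∈ S.support) :
    ∀ w, w ∈ (S.takeUntil x hx).support → w ∈ (S.dropUntil x hx).support → w = x := by
  intro w hw1 hw2
  have h1 : S.support = (S.takeUntil x hx).support ++ (S.dropUntil x hx).support.tail := by
    conv_lhs => rw [← take_spec S hx]
    exact support_append _ _
  have hnd := hS.support_nodup
  rw [h1, List.nodup_append] at hnd
  rw [support_eq_cons (S.dropUntil x hx)] at hw2
  rcases List.mem_cons.mp hw2 with h2 | h2
  · exact h2
  · exact absurd rfl (hnd.2.2 w hw1 w h2)

lemma mem_dropUntil_or [DecidableEq V] {u v : V} (S : G.Walk u v) :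
    ∀ (x y : V) (hx : x ∈ S.support) (hy : y ∈ S.support),
      y ∈ (S.dropUntil x hx).support ∨ x ∈ (S.dropUntil y hy).support := by
  induction S with
  | nil =>
    intro x y hx hy
    rw [mem_support_nil_iff] at hx hy
    subst hx; subst hy
    left; exact start_mem_support _
  | @cons u u' v h W ih =>
    intro x y hx hy
    by_cases hxu : u = x
    · subst hxu
      left
      have he : (cons h W).dropUntil u hx = cons h W := by simp [Walk.dropUntil]
      rw [he]; exact hy
    · by_cases hyu : u = y
      · subst hyu
        right
        have he : (cons h W).dropUntil u hy = cons h W := by simp [Walk.dropUntil]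
        rw [he]; exact hx
      · have hx' : x ∈ W.support := by
          rcases List.mem_cons.mp ((support_cons h W) ▸ hx) with h' | h'
          · exact absurd h'.symm hxu
          · exact h'
        have hy' : y ∈ W.support := by
          rcases List.mem_cons.mp ((support_cons h W) ▸ hy) with h' | h'
          · exact absurd h'.symm hyu
          · exact h'
        have e1 : (cons h W).dropUntil x hx = W.dropUntil x hx' := by
          simp [Walk.dropUntil, hxu]
        have e2 : (cons h W).dropUntil y hy = W.dropUntil y hy' := by
          simp [Walk.dropUntil, hyu]
        rw [e1, e2]
        exact ih x y hx' hy'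

/-- "first hit" decomposition of a walk at a set. -/
lemma exists_first_hit {u v : V} (W : G.Walk u v) (T : Set V)
    (h : ∃ w ∈ W.support, w ∈ T) :
    ∃ (x : V) (W₁ : G.Walk u x) (W₂ : G.Walk x v), x ∈ T ∧ W = W₁.append W₂ ∧
      ∀ w ∈ W₁.support, w ∈ T → w = x := by
  induction W with
  | nil =>
    obtain ⟨w, hw, hwT⟩ := h
    exact ⟨_, Walk.nil, Walk.nil, (mem_support_nil_iff.mp hw) ▸ hwT, rfl,
      fun w' hw' _ => mem_support_nil_iff.mp hw'⟩
  | @cons u u' v hadj W ih =>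
    by_cases hu : u ∈ T
    · exact ⟨u, Walk.nil, cons hadj W, hu, rfl, fun w' hw' _ => mem_support_nil_iff.mp hw'⟩
    · obtain ⟨w, hw, hwT⟩ := h
      have hw' : w ∈ W.support := by
        rcases List.mem_cons.mp ((support_cons hadj W) ▸ hw) with h' | h'
        · exact absurd (h' ▸ hwT) hu
        · exact h'
      obtain ⟨x, W₁, W₂, hxT, heq, hfirst⟩ := ih ⟨w, hw', hwT⟩
      refine ⟨x, cons hadj W₁, W₂, hxT, by rw [cons_append, ← heq], ?_⟩
      intro w' hw'' hw'T
      rcases List.mem_cons.mp ((support_cons hadj W₁) ▸ hw'') with h' | h'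
      · exact absurd (h' ▸ hw'T) hu
      · exact hfirst w' h' hw'T


lemma seg_support_nodup {a b : V} (p : G.Walk a b)
    (hinj : ∀ i j, i ≤ p.length → j ≤ p.length → p.getVert i = p.getVert j → i = j) :
    ∀ (s n : ℕ) (h : s + n ≤ p.length), (seg p s n h).support.Nodup := by
  intro s n
  induction n generalizing s with
  | zero => intro h; simp [seg]
  | succ n ih =>
    intro h
    simp only [seg, support_cons, support_copy]
    refine List.nodup_cons.mpr ⟨?_, ih (s+1) (by omega)⟩
    rw [mem_seg_support_iff]
    rintro ⟨r, h1, h2, h3⟩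
    have := hinj r s (by omega) (by omega) h3
    omega

end Walk
end SimpleGraph

open SimpleGraph in
theorem chordal_implies_subgeodesic_n1_separator {V : Type*} (G : SimpleGraph V)
    (hconn : G.Connected) (k : ℕ) (hch : G.KMChordal k 1) :
    ∀ (a b : V) (p : G.Walk a b), G.IsGeodesic p → k + 4 ≤ 2 * G.dist a b →
      ∀ (a' b' : V) (p₁ : G.Walk a a') (p₂ : G.Walk a' b') (p₃ : G.Walk b' b),
        p = p₁.append (p₂.append p₃) →
        2 ≤ G.dist a a' → 2 ≤ G.dist a b' → 2 ≤ G.dist b a' → 2 ≤ G.dist b b' →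
        k ≤ 2 * G.dist a' b' + 4 →
        G.NrSeparates {x | x ∈ p₂.support} 1 a b := by
  classical
  intro a b p hp hdab a' b' p₁ p₂ p₃ hsplit h2aa' h2ab' h2ba' h2bb' hk
  have hm : p.length = G.dist a b := hp
  -- lengths of the three pieces
  have hlen : p₁.length + (p₂.length + p₃.length) = p.length := by
    rw [hsplit, Walk.length_append, Walk.length_append]
  have hd1 : G.dist a a' ≤ p₁.length := dist_le p₁
  have hd2 : G.dist a' b' ≤ p₂.length := dist_le p₂
  have hd3 : G.dist b' b ≤ p₃.length := dist_le p₃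
  have ht1 : G.dist a b ≤ G.dist a a' + G.dist a' b := hconn.dist_triangle
  have ht2 : G.dist a' b ≤ G.dist a' b' + G.dist b' b := hconn.dist_triangle
  have hdab' : G.dist a' b ≤ p₂.length + p₃.length := by
    have := dist_le (p₂.append p₃); rwa [Walk.length_append] at this
  have hL1 : p₁.length = G.dist a a' := by omega
  have hL2 : p₂.length = G.dist a' b' := by omega
  have hL3 : p₃.length = G.dist b' b := by omega
  -- distances along the geodesic
  have key : ∀ i j, i ≤ j → j ≤ p.length →
      G.dist (p.getVert i) (p.getVert j) = j - i := by
    intro i j hij hj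
    have up : G.dist (p.getVert i) (p.getVert j) ≤ j - i := by
      have h' := dist_le (Walk.seg p i (j - i) (by omega))
      rw [Walk.seg_length] at h'
      rwa [Nat.add_sub_cancel' hij] at h'
    have upi : G.dist a (p.getVert i) ≤ i := by
      have h' := dist_le (Walk.seg p 0 i (by omega))
      rw [Walk.seg_length] at h'
      simpa using h'
    have upj : G.dist (p.getVert j) b ≤ p.length - j := by
      have h' := dist_le (Walk.seg p j (p.length - j) (by omega))
      rw [Walk.seg_length, Nat.add_sub_cancel' hj, Walk.getVert_length] at h'
      exact h'
    have t1 : G.dist a b ≤ G.dist a (p.getVert i) + G.dist (p.getVert i) b :=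
      hconn.dist_triangle
    have t2 : G.dist (p.getVert i) b ≤
        G.dist (p.getVert i) (p.getVert j) + G.dist (p.getVert j) b := hconn.dist_triangle
    omega
  have inj : ∀ i j, i ≤ p.length → j ≤ p.length → p.getVert i = p.getVert j → i = j := by
    intro i j hi hj he
    rcases le_total i j with h | h
    · have h' := key i j h hj
      rw [he] at h'
      have h0 : G.dist (p.getVert j) (p.getVert j) = 0 := dist_self
      omega
    · have h' := key j i h hi
      rw [he] at h'
      have h0 : G.dist (p.getVert j) (p.getVert j) = 0 := dist_self
      omega
  have hgpmem : ∀ r, r ≤ p.length → p.getVert r ∈ p.support :=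
    fun r hr => Walk.mem_support_iff_exists_getVert.mpr ⟨r, rfl, hr⟩
  -- getVert of pieces
  have hgp1 : ∀ n, n ≤ p₁.length → p₁.getVert n = p.getVert n := by
    intro n hn
    rw [hsplit, Walk.getVert_append]
    by_cases h : n < p₁.length
    · rw [if_pos h]
    · have hn' : n = p₁.length := by omega
      subst hn'
      rw [if_neg h, Nat.sub_self, Walk.getVert_zero, Walk.getVert_length]
  have hgp2 : ∀ n, n ≤ p₂.length → p₂.getVert n = p.getVert (p₁.length + n) := by
    intro n hn
    rw [hsplit, Walk.getVert_append, if_neg (by omega)]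
    have he : p₁.length + n - p₁.length = n := by omega
    rw [he, Walk.getVert_append]
    by_cases h : n < p₂.length
    · rw [if_pos h]
    · have hn' : n = p₂.length := by omega
      subst hn'
      rw [if_neg h, Nat.sub_self, Walk.getVert_zero, Walk.getVert_length]
  have hgp3 : ∀ n, n ≤ p₃.length → p₃.getVert n = p.getVert (p₁.length + p₂.length + n) := by
    intro n hn
    rw [hsplit, Walk.getVert_append, if_neg (by omega)]
    have he : p₁.length + p₂.length + n - p₁.length = p₂.length + n := by omega
    rw [he, Walk.getVert_append, if_neg (by omega)]
    have he2 : p₂.length + n - p₂.length = n := by omega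
    rw [he2]
  have hmem2 : ∀ w, w ∈ p₂.support ↔
      ∃ r, p₁.length ≤ r ∧ r ≤ p₁.length + p₂.length ∧ p.getVert r = w := by
    intro w
    rw [Walk.mem_support_iff_exists_getVert]
    constructor
    · rintro ⟨n, rfl, hn⟩
      exact ⟨p₁.length + n, by omega, by omega, (hgp2 n hn).symm⟩
    · rintro ⟨r, h1, h2, rfl⟩
      refine ⟨r - p₁.length, ?_, by omega⟩
      rw [hgp2 _ (by omega)]
      congr 1
      omega
  have hmem1 : ∀ w, w ∈ p₁.support → ∃ r, r ≤ p₁.length ∧ p.getVert r = w := by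
    intro w hw
    obtain ⟨n, hn1, hn2⟩ := Walk.mem_support_iff_exists_getVert.mp hw
    exact ⟨n, hn2, by rw [← hgp1 n hn2]; exact hn1⟩
  have hmem3 : ∀ w, w ∈ p₃.support →
      ∃ r, p₁.length + p₂.length ≤ r ∧ r ≤ p.length ∧ p.getVert r = w := by
    intro w hw
    obtain ⟨n, hn1, hn2⟩ := Walk.mem_support_iff_exists_getVert.mp hw
    exact ⟨p₁.length + p₂.length + n, by omega, by omega, by rw [← hgp3 n hn2]; exact hn1⟩
  have hpsub : ∀ w ∈ p.support, w ∈ p₁.support ∨ w ∈ p₂.support ∨ w ∈ p₃.support := by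
    intro w hw
    rw [hsplit, Walk.mem_support_append_iff, Walk.mem_support_append_iff] at hw
    tauto
  have ha' : a' = p.getVert p₁.length := by
    have h' := hgp2 0 (by omega)
    simpa using h'
  have hb' : b' = p.getVert (p₁.length + p₂.length) := by
    have h' := hgp2 p₂.length (le_refl _)
    simpa using h'
  refine ⟨?_, ?_, ?_⟩
  · -- a is far from p₂
    intro z hz
    obtain ⟨r, hr1, hr2, rfl⟩ := (hmem2 z).mp hz
    have h' := key 0 r (by omega) (by omega)
    rw [Walk.getVert_zero] at h'
    omega
  · -- b is far from p₂
    intro z hz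
    obtain ⟨r, hr1, hr2, rfl⟩ := (hmem2 z).mp hz
    have h' := key r p.length (by omega) (le_refl _)
    rw [Walk.getVert_length] at h'
    have hc : G.dist b (p.getVert r) = G.dist (p.getVert r) b := dist_comm
    have hc2 : G.dist b' b = G.dist b b' := dist_comm
    omega
  · -- the separation property
    intro γ
    by_contra hcon
    push_neg at hcon
    have hfar : ∀ w ∈ γ.support, ∀ z ∈ p₂.support, 2 ≤ G.dist w z := by
      intro w hw z hz
      have := hcon w hw z hz
      omega
    -- the main inductive argument
    have MAIN : ∀ N s t (S : G.Walk (p.getVert s) (p.getVert t)),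
        s < p₁.length → p₁.length + p₂.length < t → t ≤ p.length → S.IsPath →
        (∀ w ∈ S.support, w ≠ p.getVert s → w ≠ p.getVert t →
          w ∉ p.support ∧ ∀ z ∈ p₂.support, 2 ≤ G.dist w z) →
        (t - s) + S.length < N → False := by
      intro N
      induction N with
      | zero => intro s t S _ _ _ _ _ hmeas; omega
      | succ N ih =>
        intro s t S hsα hβt htm hSpath hint hmeas
        have hst : s + (t - s) = t := by omega
        set A : G.Walk (p.getVert s) (p.getVert t) :=
          (Walk.seg p s (t - s) (by omega)).copy rfl (by rw [hst]) with hA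
        have hAlen : A.length = t - s := by
          rw [hA, Walk.length_copy, Walk.seg_length]
        have hAmem : ∀ w, w ∈ A.support ↔ ∃ r, s ≤ r ∧ r ≤ t ∧ p.getVert r = w := by
          intro w
          rw [hA, Walk.support_copy, Walk.mem_seg_support_iff]
          constructor <;> rintro ⟨r, h1, h2, h3⟩ <;> exact ⟨r, by omega, by omega, h3⟩
        have hAedge : ∀ r, s ≤ r → r < t → s(p.getVert r, p.getVert (r+1)) ∈ A.edges := by
          intro r h1 h2
          rw [hA, Walk.edges_copy]
          exact Walk.seg_edge_mem p s (t - s) (by omega) r h1 (by omega)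
        have hApath : A.IsPath := by
          rw [Walk.isPath_def, hA, Walk.support_copy]
          exact Walk.seg_support_nodup p inj s (t - s) (by omega)
        set C : G.Walk (p.getVert s) (p.getVert s) := A.append S.reverse with hC
        have hClen : C.length = (t - s) + S.length := by
          rw [hC, Walk.length_append, Walk.length_reverse, hAlen]
        have hCsup : ∀ w ∈ C.support, w ∈ A.support ∨ w ∈ S.support := by
          intro w hw
          rw [hC, Walk.mem_support_append_iff] at hw
          rcases hw with h | h
          · exact Or.inl h
          · right; rwa [Walk.support_reverse, List.mem_reverse] at h
        have hAedgeC : ∀ e ∈ A.edges, e ∈ C.edges := by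
          intro e he
          rw [hC, Walk.edges_append]
          exact List.mem_append_left _ he
        have hSedgeC : ∀ e ∈ S.edges, e ∈ C.edges := by
          intro e he
          rw [hC, Walk.edges_append]
          refine List.mem_append_right _ ?_
          rwa [Walk.edges_reverse, List.mem_reverse]
        have hWD1 : ∀ x y : V, s(x, y) ∈ C.edges → G.walkDist C x y ≤ 1 := by
          intro x y he
          have hadj : (fromEdgeSet {e | e ∈ C.edges}).Adj x y := by
            rw [fromEdgeSet_adj]
            exact ⟨he, (C.adj_of_mem_edges he).ne⟩
          have h1 := dist_le (Walk.cons hadj Walk.nil)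
          simpa [walkDist] using h1
        have hwdsymm : ∀ x y : V, G.walkDist C x y = G.walkDist C y x :=
          fun x y => dist_comm
        have hts2 : 2 ≤ t - s := by omega
        have hSlen : t - s ≤ S.length := by
          have h1 := dist_le S
          have h2 := key s t (by omega) htm
          omega
        have hASint : ∀ w, w ∈ A.support → w ∈ S.support →
            w = p.getVert s ∨ w = p.getVert t := by
          intro w hwA hwS
          by_contra hc
          push_neg at hc
          have h1 := (hint w hwS hc.1 hc.2).1
          obtain ⟨r, hr1, hr2, rfl⟩ := (hAmem w).mp hwA
          exact h1 (hgpmem r (by omega))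
        have hCcyc : C.IsCycle := by
          have hedis : ∀ e ∈ A.edges, e ∉ S.reverse.edges := by
            intro e
            induction e using Sym2.ind with
            | _ x y =>
              intro heA heS
              have heS' : s(x, y) ∈ S.edges := by
                rwa [Walk.edges_reverse, List.mem_reverse] at heS
              have hxA := A.fst_mem_support_of_mem_edges heA
              have hyA := A.snd_mem_support_of_mem_edges heA
              have hxS := S.fst_mem_support_of_mem_edges heS'
              have hyS := S.snd_mem_support_of_mem_edges heS'
              have hadj := A.adj_of_mem_edges heA
              have hd : G.dist x y = 1 := dist_eq_one_iff_adj.mpr hadj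
              have hkey := key s t (by omega) htm
              rcases hASint x hxA hxS with rfl | rfl <;>
                rcases hASint y hyA hyS with h | h
              · exact hadj.ne h.symm
              · rw [h] at hd; omega
              · rw [h] at hd
                have hc : G.dist (p.getVert t) (p.getVert s) =
                    G.dist (p.getVert s) (p.getVert t) := dist_comm
                omega
              · exact hadj.ne h.symm
          have hCtrail : C.edges.Nodup := by
            rw [hC, Walk.edges_append]
            exact List.Nodup.append hApath.isTrail.edges_nodup
              (hSpath.reverse).isTrail.edges_nodup hedis
          have hCne : C ≠ Walk.nil := by
            intro h
            have h1 := hClen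
            rw [h] at h1
            simp only [Walk.length_nil] at h1
            omega
          have hCtail : C.support.tail.Nodup := by
            have h1 : C.support = A.support ++ S.reverse.support.tail := by
              rw [hC]; exact Walk.support_append _ _
            have h2 : C.support.tail = A.support.tail ++ S.reverse.support.tail := by
              rw [h1, List.tail_append_of_ne_nil (Walk.support_ne_nil _)]
            rw [h2]
            refine List.Nodup.append (hApath.support_nodup.tail)
              ((hSpath.reverse).support_nodup.tail) ?_
            intro w hw1 hw2
            have hwA : w ∈ A.support := List.mem_of_mem_tail hw1
            have hwS : w ∈ S.support := by
              have h3 := List.mem_of_mem_tail hw2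
              rwa [Walk.support_reverse, List.mem_reverse] at h3
            rcases hASint w hwA hwS with rfl | rfl
            · have h4 := hApath.support_nodup
              rw [Walk.support_eq_cons A] at h4
              exact (List.nodup_cons.mp h4).1 hw1
            · have h4 := (hSpath.reverse).support_nodup
              rw [Walk.support_eq_cons S.reverse] at h4
              exact (List.nodup_cons.mp h4).1 hw2
          exact ⟨⟨⟨hCtrail⟩, hCne⟩, hCtail⟩
        have hkC : k ≤ C.length := by
          rw [hClen]; omega
        obtain ⟨u, v, σ, ⟨hσpath, huC, hvC, hlt⟩, hσle⟩ := hch _ C hCcyc hkC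
        have hσ1 : σ.length = 1 := by
          by_contra hne
          have h0 : σ.length = 0 := by omega
          have huv : u = v := Walk.eq_of_length_eq_zero h0
          rw [h0, huv] at hlt
          have hz : G.walkDist C v v = 0 := dist_self
          omega
        have hadjuv : G.Adj u v := σ.adj_of_length_eq_one hσ1
        have hwduv : 2 ≤ G.walkDist C u v := by omega
        have hclass : ∀ w ∈ C.support, (∃ r, s ≤ r ∧ r ≤ t ∧ p.getVert r = w) ∨
            (w ∈ S.support ∧ w ∉ p.support ∧ ∀ z ∈ p₂.support, 2 ≤ G.dist w z) := by
          intro w hw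
          rcases hCsup w hw with h | h
          · exact Or.inl ((hAmem w).mp h)
          · by_cases h1 : w = p.getVert s
            · exact Or.inl ⟨s, le_refl _, by omega, h1.symm⟩
            by_cases h2 : w = p.getVert t
            · exact Or.inl ⟨t, by omega, le_refl _, h2.symm⟩
            obtain ⟨hnp, hfw⟩ := hint w h h1 h2
            exact Or.inr ⟨h, hnp, hfw⟩
        have hgeo2 : ∀ r₁ r₂, s ≤ r₁ → r₁ ≤ t → s ≤ r₂ → r₂ ≤ t →
            G.Adj (p.getVert r₁) (p.getVert r₂) →
            2 ≤ G.walkDist C (p.getVert r₁) (p.getVert r₂) → False := by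
          intro r₁ r₂ h1 h2 h3 h4 hadj hwd
          have hd1 : G.dist (p.getVert r₁) (p.getVert r₂) = 1 := dist_eq_one_iff_adj.mpr hadj
          rcases le_total r₁ r₂ with hle | hle
          · have h5 := key r₁ r₂ hle (by omega)
            have hr : r₂ = r₁ + 1 := by omega
            subst hr
            have h6 := hWD1 _ _ (hAedgeC _ (hAedge r₁ h1 (by omega)))
            omega
          · have h5 := key r₂ r₁ hle (by omega)
            have hc : G.dist (p.getVert r₂) (p.getVert r₁) =
                G.dist (p.getVert r₁) (p.getVert r₂) := dist_comm
            have hr : r₁ = r₂ + 1 := by omega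
            subst hr
            have he := hAedgeC _ (hAedge r₂ h3 (by omega))
            rw [Sym2.eq_swap] at he
            have h6 := hWD1 _ _ he
            omega
        have hint2 : ∀ x y (hx : x ∈ S.support) (hy : y ∈ S.support),
            G.Adj x y → 2 ≤ G.walkDist C x y → x ∉ p.support → y ∉ p.support →
            y ∈ (S.dropUntil x hx).support → False := by
          intro x y hx hy hadj hwd hxnp hynp hyd
          have hsum : (S.takeUntil x hx).length + (S.dropUntil x hx).length = S.length := by
            have h1 := congrArg Walk.length (Walk.take_spec S hx)
            rwa [Walk.length_append] at h1
          have hDRupath : (S.dropUntil x hx).IsPath := hSpath.dropUntil hx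
          have hsum2 : ((S.dropUntil x hx).takeUntil y hyd).length +
              ((S.dropUntil x hx).dropUntil y hyd).length = (S.dropUntil x hx).length := by
            have h1 := congrArg Walk.length (Walk.take_spec (S.dropUntil x hx) hyd)
            rwa [Walk.length_append] at h1
          have hTK2pos : 1 ≤ ((S.dropUntil x hx).takeUntil y hyd).length := by
            rcases Nat.eq_zero_or_pos ((S.dropUntil x hx).takeUntil y hyd).length with h | h
            · exact absurd (Walk.eq_of_length_eq_zero h) hadj.ne
            · exact h
          have hTK2ne1 : ((S.dropUntil x hx).takeUntil y hyd).length ≠ 1 := by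
            intro h1
            have he : s(x, y) ∈ ((S.dropUntil x hx).takeUntil y hyd).edges :=
              Walk.edge_mem_of_length_eq_one h1
            have heS : s(x, y) ∈ S.edges :=
              Walk.edges_dropUntil_subset S hx (Walk.edges_takeUntil_subset _ hyd he)
            have h6 := hWD1 _ _ (hSedgeC _ heS)
            omega
          have hxnDR2 : x ∉ ((S.dropUntil x hx).dropUntil y hyd).support := by
            intro hmem
            have h1 := Walk.takeUntil_dropUntil_inter hDRupath hyd x
              (Walk.start_mem_support _) hmem
            exact hadj.ne h1
          have hdisj : ∀ w, w ∈ (S.takeUntil x hx).support →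
              w ∈ ((S.dropUntil x hx).dropUntil y hyd).support → False := by
            intro w hw1 hw2
            have hw2' : w ∈ (S.dropUntil x hx).support :=
              Walk.support_dropUntil_subset _ hyd hw2
            have h1 := Walk.takeUntil_dropUntil_inter hSpath hx w hw1 hw2'
            subst h1
            exact hxnDR2 hw2
          set S' : G.Walk (p.getVert s) (p.getVert t) :=
            (S.takeUntil x hx).append (Walk.cons hadj ((S.dropUntil x hx).dropUntil y hyd))
            with hS'
          have hS'sup : ∀ w ∈ S'.support, w ∈ S.support := by
            intro w hw
            rw [hS', Walk.mem_support_append_iff] at hw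
            rcases hw with h | h
            · exact Walk.support_takeUntil_subset _ hx h
            · rw [Walk.support_cons] at h
              rcases List.mem_cons.mp h with rfl | h
              · exact hx
              · exact Walk.support_dropUntil_subset _ hx
                  (Walk.support_dropUntil_subset _ hyd h)
          have hS'path : S'.IsPath := by
            rw [Walk.isPath_def]
            have h1 : S'.support = (S.takeUntil x hx).support ++
                ((S.dropUntil x hx).dropUntil y hyd).support := by
              rw [hS', Walk.support_append, Walk.support_cons, List.tail_cons]
            rw [h1]
            exact List.Nodup.append (hSpath.takeUntil hx).support_nodup
              (hDRupath.dropUntil hyd).support_nodup hdisj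
          have hS'len : S'.length + ((S.dropUntil x hx).takeUntil y hyd).length
              = S.length + 1 := by
            rw [hS', Walk.length_append, Walk.length_cons]
            omega
          exact ih s t S' hsα hβt htm hS'path
            (fun w hw h1 h2 => hint w (hS'sup w hw) h1 h2) (by omega)
        have hmixed : ∀ r y (hy : y ∈ S.support), s ≤ r → r ≤ t → y ∉ p.support →
            (∀ z ∈ p₂.support, 2 ≤ G.dist y z) →
            G.Adj (p.getVert r) y → 2 ≤ G.walkDist C (p.getVert r) y → False := by
          intro r y hy hr1 hr2 hynp hyfar hadj hwd
          by_cases hcase : p₁.length ≤ r ∧ r ≤ p₁.length + p₂.length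
          · have hz : p.getVert r ∈ p₂.support := (hmem2 _).mpr ⟨r, hcase.1, hcase.2, rfl⟩
            have h1 := hyfar _ hz
            have h2 : G.dist y (p.getVert r) = 1 := dist_eq_one_iff_adj.mpr hadj.symm
            omega
          · have hsum : (S.takeUntil y hy).length + (S.dropUntil y hy).length = S.length := by
              have h1 := congrArg Walk.length (Walk.take_spec S hy)
              rwa [Walk.length_append] at h1
            rcases Nat.lt_or_ge r p₁.length with hrl | hrg
            · -- left surgery
              have hTKpos : 1 ≤ (S.takeUntil y hy).length := by
                rcases Nat.eq_zero_or_pos (S.takeUntil y hy).length with h | h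
                · exact absurd ((Walk.eq_of_length_eq_zero h) ▸ hgpmem s (by omega)) hynp
                · exact h
              have hnot : ¬((S.takeUntil y hy).length = 1 ∧ r = s) := by
                rintro ⟨h1, rfl⟩
                have he : s(p.getVert r, y) ∈ (S.takeUntil y hy).edges :=
                  Walk.edge_mem_of_length_eq_one h1
                have h6 := hWD1 _ _ (hSedgeC _ (Walk.edges_takeUntil_subset _ hy he))
                omega
              have hrnDR : p.getVert r ∉ (S.dropUntil y hy).support := by
                intro hmem
                have hgprS : p.getVert r ∈ S.support := Walk.support_dropUntil_subset _ hy hmem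
                by_cases h1 : p.getVert r = p.getVert s
                · have h2 := Walk.takeUntil_dropUntil_inter hSpath hy (p.getVert s)
                    (Walk.start_mem_support _) (by rwa [h1] at hmem)
                  exact hynp (h2 ▸ hgpmem s (by omega))
                by_cases h2 : p.getVert r = p.getVert t
                · have hrt : r = t := inj r t (by omega) (by omega) h2
                  omega
                · exact (hint _ hgprS h1 h2).1 (hgpmem r (by omega))
              set S' : G.Walk (p.getVert r) (p.getVert t) :=
                Walk.cons hadj (S.dropUntil y hy) with hS'
              have hS'path : S'.IsPath := (hSpath.dropUntil hy).cons hrnDR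
              have hS'len : S'.length = (S.dropUntil y hy).length + 1 := by
                rw [hS', Walk.length_cons]
              refine ih r t S' hrl hβt htm hS'path ?_ (by omega)
              intro w hw h1 h2
              rw [hS', Walk.support_cons] at hw
              rcases List.mem_cons.mp hw with rfl | hwDR
              · exact absurd rfl h1
              · have hwS : w ∈ S.support := Walk.support_dropUntil_subset _ hy hwDR
                have hwns : w ≠ p.getVert s := by
                  rintro rfl
                  have h3 := Walk.takeUntil_dropUntil_inter hSpath hy (p.getVert s)
                    (Walk.start_mem_support _) hwDR
                  exact hynp (h3 ▸ hgpmem s (by omega))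
                exact hint w hwS hwns h2
            · -- right surgery
              have hrb : p₁.length + p₂.length < r := by omega
              have hDRpos : 1 ≤ (S.dropUntil y hy).length := by
                rcases Nat.eq_zero_or_pos (S.dropUntil y hy).length with h | h
                · exact absurd ((Walk.eq_of_length_eq_zero h).symm ▸ hgpmem t htm) hynp
                · exact h
              have hnot : ¬((S.dropUntil y hy).length = 1 ∧ r = t) := by
                rintro ⟨h1, rfl⟩
                have he : s(y, p.getVert r) ∈ (S.dropUntil y hy).edges :=
                  Walk.edge_mem_of_length_eq_one h1
                rw [Sym2.eq_swap] at he
                have h6 := hWD1 _ _ (hSedgeC _ (Walk.edges_dropUntil_subset _ hy he))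
                omega
              have hrnTK : p.getVert r ∉ (S.takeUntil y hy).support := by
                intro hmem
                have hgprS : p.getVert r ∈ S.support := Walk.support_takeUntil_subset _ hy hmem
                by_cases h1 : p.getVert r = p.getVert s
                · have hrs : r = s := inj r s (by omega) (by omega) h1
                  omega
                by_cases h2 : p.getVert r = p.getVert t
                · have h3 := Walk.takeUntil_dropUntil_inter hSpath hy (p.getVert t)
                    (by rwa [h2] at hmem) (Walk.end_mem_support _)
                  exact hynp (h3 ▸ hgpmem t htm)
                · exact (hint _ hgprS h1 h2).1 (hgpmem r (by omega))
              set S' : G.Walk (p.getVert s) (p.getVert r) :=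
                (S.takeUntil y hy).append (Walk.cons hadj.symm Walk.nil) with hS'
              have hS'path : S'.IsPath := by
                rw [Walk.isPath_def]
                have h1 : S'.support = (S.takeUntil y hy).support ++ [p.getVert r] := by
                  rw [hS', Walk.support_append, Walk.support_cons, Walk.support_nil, List.tail_cons]
                rw [h1]
                refine List.Nodup.append (hSpath.takeUntil hy).support_nodup
                  (List.nodup_singleton _) ?_
                intro w hw1 hw2
                rw [List.mem_singleton] at hw2
                subst hw2
                exact hrnTK hw1
              have hS'len : S'.length = (S.takeUntil y hy).length + 1 := by
                rw [hS', Walk.length_append, Walk.length_cons, Walk.length_nil]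
              refine ih s r S' hsα hrb (by omega) hS'path ?_ (by omega)
              intro w hw h1 h2
              have h3 : S'.support = (S.takeUntil y hy).support ++ [p.getVert r] := by
                rw [hS', Walk.support_append, Walk.support_cons, Walk.support_nil, List.tail_cons]
              rw [h3, List.mem_append] at hw
              rcases hw with hwTK | hwr
              · have hwS : w ∈ S.support := Walk.support_takeUntil_subset _ hy hwTK
                have hwnt : w ≠ p.getVert t := by
                  rintro rfl
                  have h4 := Walk.takeUntil_dropUntil_inter hSpath hy (p.getVert t)
                    hwTK (Walk.end_mem_support _)
                  exact hynp (h4 ▸ hgpmem t htm)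
                exact hint w hwS h1 hwnt
              · rw [List.mem_singleton] at hwr
                exact absurd hwr h2
        -- final case analysis
        rcases hclass u huC with ⟨r₁, h1, h2, hg1⟩ | ⟨huS, hunp, hufar⟩
        · rcases hclass v hvC with ⟨r₂, h3, h4, hg2⟩ | ⟨hvS, hvnp, hvfar⟩
          · exact hgeo2 r₁ r₂ h1 h2 h3 h4 (by rw [hg1, hg2]; exact hadjuv)
              (by rw [hg1, hg2]; exact hwduv)
          · exact hmixed r₁ v hvS h1 h2 hvnp hvfar (by rw [hg1]; exact hadjuv)
              (by rw [hg1]; exact hwduv)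
        · rcases hclass v hvC with ⟨r₂, h3, h4, hg2⟩ | ⟨hvS, hvnp, hvfar⟩
          · exact hmixed r₂ u huS h3 h4 hunp hufar (by rw [hg2]; exact hadjuv.symm)
              (by rw [hg2, hwdsymm _ u]; exact hwduv)
          · rcases Walk.mem_dropUntil_or S u v huS hvS with h | h
            · exact hint2 u v huS hvS hadjuv hwduv hunp hvnp h
            · exact hint2 v u hvS huS hadjuv.symm (by rw [hwdsymm v u]; exact hwduv)
                hvnp hunp h
    -- construct the initial configuration from the avoiding walk γ
    have hγ₀path : γ.bypass.IsPath := Walk.bypass_isPath γ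
    have hγ₀sub : ∀ w ∈ γ.bypass.support, w ∈ γ.support :=
      fun w hw => Walk.support_bypass_subset γ hw
    obtain ⟨x, R₁, R₂, hxT, heq1, hfirst1⟩ := Walk.exists_first_hit γ.bypass.reverse
      {w | w ∈ p₁.support} ⟨a, Walk.end_mem_support _, p₁.start_mem_support⟩
    have hR₁path : R₁.IsPath := (heq1 ▸ hγ₀path.reverse).of_append_left
    have hWpath : R₁.reverse.IsPath := hR₁path.reverse
    obtain ⟨y, Q₁, Q₂, hyT, heq2, hfirst2⟩ := Walk.exists_first_hit R₁.reverse
      {w | w ∈ p₃.support} ⟨b, Walk.end_mem_support _, p₃.end_mem_support⟩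
    have hQ₁path : Q₁.IsPath := (heq2 ▸ hWpath).of_append_left
    have hQsubγ : ∀ w ∈ Q₁.support, w ∈ γ.support := by
      intro w hw
      have h1 : w ∈ R₁.reverse.support := by
        rw [heq2, Walk.mem_support_append_iff]; exact Or.inl hw
      rw [Walk.support_reverse, List.mem_reverse] at h1
      have h2 : w ∈ γ.bypass.reverse.support := by
        rw [heq1, Walk.mem_support_append_iff]; exact Or.inl h1
      rw [Walk.support_reverse, List.mem_reverse] at h2
      exact hγ₀sub w h2
    have hQfirst1 : ∀ w ∈ Q₁.support, w ∈ p₁.support → w = x := by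
      intro w hw hwp
      have h1 : w ∈ R₁.reverse.support := by
        rw [heq2, Walk.mem_support_append_iff]; exact Or.inl hw
      rw [Walk.support_reverse, List.mem_reverse] at h1
      exact hfirst1 w h1 hwp
    obtain ⟨s, hs_le, hgs⟩ := hmem1 x hxT
    have hxfar : 2 ≤ G.dist x a' := hfar x (hQsubγ x (Walk.start_mem_support _))
      a' (Walk.start_mem_support _)
    have hs_lt : s < p₁.length := by
      have h1 := key s p₁.length hs_le (by omega)
      rw [hgs, ← ha'] at h1
      omega
    obtain ⟨t, htβ, htm, hgt⟩ := hmem3 y hyT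
    have hyfar : 2 ≤ G.dist y b' := hfar y (hQsubγ y (Walk.end_mem_support _))
      b' (Walk.end_mem_support _)
    have ht_gt : p₁.length + p₂.length < t := by
      have h1 := key (p₁.length + p₂.length) t htβ htm
      rw [hgt, ← hb'] at h1
      have hc : G.dist b' y = G.dist y b' := dist_comm
      omega
    set S₀ : G.Walk (p.getVert s) (p.getVert t) := Q₁.copy hgs.symm hgt.symm with hS₀
    have hS₀path : S₀.IsPath := by
      rw [hS₀, Walk.isPath_copy]
      exact hQ₁path
    have hS₀int : ∀ w ∈ S₀.support, w ≠ p.getVert s → w ≠ p.getVert t →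
        w ∉ p.support ∧ ∀ z ∈ p₂.support, 2 ≤ G.dist w z := by
      intro w hw hws hwt
      have hwQ : w ∈ Q₁.support := by
        rw [hS₀, Walk.support_copy] at hw
        exact hw
      have hfarw : ∀ z ∈ p₂.support, 2 ≤ G.dist w z :=
        fun z hz => hfar w (hQsubγ w hwQ) z hz
      refine ⟨?_, hfarw⟩
      intro hwp
      rcases hpsub w hwp with h1 | h1 | h1
      · exact hws (by rw [hQfirst1 w hwQ h1, ← hgs])
      · have h2 := hfarw w h1
        have h0 : G.dist w w = 0 := dist_self
        omega
      · exact hwt (by rw [hfirst2 w hwQ h1, ← hgt])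
    exact MAIN ((t - s) + S₀.length + 1) s t S₀ hs_lt ht_gt htm hS₀path hS₀int (by omega)
end
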